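/- arXiv:2112.07109 — 8 statements merged into one kernel-verified Lean document; each statement's English description precedes it below -/
import Mathlib

section
/- Unboundedness characterization for the Benders subproblem: Assume Q := {u ∈ ℝ^m : u ≥ 0 and Gᵀ u ≥ h} is nonempty. For every d ∈ ℝ^m, the set {dᵀ u : u ∈ Q} fails to be bounded below if and only if there exists r ∈ ℝ^m with r ≥ 0, Gᵀ r ≥ 0 and dᵀ r < 0. -/
open Matrix Finset

variable {E : Type*} [NormedAddCommGroup E] [NormedSpace ℝ E] [FiniteDimensional ℝ E]

/-- The cone generated by finitely many vectors is closed. -/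
theorem isClosed_coneGen {ι : Type*} [Fintype ι] [DecidableEq ι] (v : ι → E)
    (s : Finset ι) :
    IsClosed {x : E | ∃ c : ι → ℝ, 0 ≤ c ∧ x = ∑ i ∈ s, c i • v i} := by
  induction s using Finset.strongInduction with
  | _ s ih =>
    by_cases hli : LinearIndependent ℝ (fun i : ↥s => v i)
    · -- linearly independent: image of closed orthant under closed embedding
      let L : (↥s → ℝ) →ₗ[ℝ] E :=
        { toFun := fun c => ∑ i : ↥s, c i • v i
          map_add' := by intro a b; simp [add_smul, Finset.sum_add_distrib]
          map_smul' := by intro t a; simp [smul_smul, Finset.smul_sum]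
        }
      have hker : LinearMap.ker L = ⊥ := by
        rw [LinearMap.ker_eq_bot']
        intro c hc
        have := Fintype.linearIndependent_iff.mp hli c hc
        funext i; exact this i
      have hset : {x : E | ∃ c : ι → ℝ, 0 ≤ c ∧ x = ∑ i ∈ s, c i • v i}
          = L '' (Set.Ici 0) := by
        ext x
        constructor
        · rintro ⟨c, hc, rfl⟩
          exact ⟨fun i => c i, fun i => hc i, (Finset.sum_coe_sort s (fun i => c i • v i))⟩
        · rintro ⟨c, hc, rfl⟩
          refine ⟨fun i => if hi : i ∈ s then c ⟨i, hi⟩ else 0, ?_, ?_⟩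
          · intro i; dsimp only; split
            · exact hc _
            · exact le_rfl
          · show (∑ i : ↥s, c i • v i) = _
            rw [← Finset.sum_coe_sort s
              (fun i => (if hi : i ∈ s then c ⟨i, hi⟩ else 0) • v i)]
            exact Fintype.sum_congr _ _ fun i => by rw [dif_pos i.2]
      rw [hset]
      exact (L.isClosedEmbedding_of_injective hker).isClosedMap _ isClosed_Ici
    · -- dependent: the cone is a finite union of smaller cones
      rw [Fintype.not_linearIndependent_iff] at hli
      obtain ⟨g0, hg0sum, i0, hi0⟩ := hli
      -- build a relation vector supported on s with a strictly positive entry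
      obtain ⟨g, hgsum, hgout, hgpos⟩ :
          ∃ g : ι → ℝ, (∑ i ∈ s, g i • v i) = 0 ∧ (∀ i ∉ s, g i = 0) ∧
            ∃ i ∈ s, 0 < g i := by
        rcases lt_or_gt_of_ne hi0 with hneg | hpos
        · refine ⟨fun i => if hi : i ∈ s then -g0 ⟨i, hi⟩ else 0, ?_, ?_, ?_⟩
          · rw [← Finset.sum_coe_sort s]
            have : (∑ i : ↥s, (if hi : (i : ι) ∈ s then -g0 ⟨i, hi⟩ else 0) • v i)
                = -∑ i : ↥s, g0 i • v i := by
              rw [← Finset.sum_neg_distrib]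
              exact Fintype.sum_congr _ _ fun i => by rw [dif_pos i.2, neg_smul]
            rw [this, hg0sum, neg_zero]
          · intro i hi; dsimp only; rw [dif_neg hi]
          · exact ⟨i0, i0.2, by dsimp only; rw [dif_pos i0.2]; simpa using hneg⟩
        · refine ⟨fun i => if hi : i ∈ s then g0 ⟨i, hi⟩ else 0, ?_, ?_, ?_⟩
          · rw [← Finset.sum_coe_sort s]
            rw [show (∑ i : ↥s, (if hi : (i : ι) ∈ s then g0 ⟨i, hi⟩ else 0) • v i)
                = ∑ i : ↥s, g0 i • v i from
              Fintype.sum_congr _ _ fun i => by rw [dif_pos i.2]]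
            exact hg0sum
          · intro i hi; dsimp only; rw [dif_neg hi]
          · exact ⟨i0, i0.2, by dsimp only; rw [dif_pos i0.2]; exact hpos⟩
      set T : Finset ι := s.filter (fun i => 0 < g i) with hT
      have hTs : ∀ i ∈ T, i ∈ s := fun i hi => (Finset.mem_filter.mp hi).1
      obtain ⟨iw, hiws, hiwpos⟩ := hgpos
      have hTne : T.Nonempty := ⟨iw, Finset.mem_filter.mpr ⟨hiws, hiwpos⟩⟩
      have hunion : {x : E | ∃ c : ι → ℝ, 0 ≤ c ∧ x = ∑ i ∈ s, c i • v i}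
          = ⋃ i ∈ T, {x : E | ∃ c : ι → ℝ, 0 ≤ c ∧ x = ∑ j ∈ s.erase i, c j • v j} := by
        ext x
        simp only [Set.mem_iUnion, Set.mem_setOf_eq]
        constructor
        · rintro ⟨a, ha, rfl⟩
          obtain ⟨i₁, hi₁T, hmin⟩ := T.exists_min_image (fun i => a i / g i) hTne
          have hgi₁ : 0 < g i₁ := (Finset.mem_filter.mp hi₁T).2
          set t : ℝ := a i₁ / g i₁ with ht
          have ht0 : 0 ≤ t := div_nonneg (ha i₁) hgi₁.le
          refine ⟨i₁, hi₁T, fun j => a j - t * g j, ?_, ?_⟩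
          · intro j
            by_cases hjT : j ∈ T
            · have hgj : 0 < g j := (Finset.mem_filter.mp hjT).2
              have : t ≤ a j / g j := hmin j hjT
              have := (le_div_iff₀ hgj).mp this
              simpa using sub_nonneg.mpr this
            · have hgj : g j ≤ 0 := by
                by_cases hjs : j ∈ s
                · by_contra hc
                  exact hjT (Finset.mem_filter.mpr ⟨hjs, lt_of_not_ge hc⟩)
                · rw [hgout j hjs]
              have : t * g j ≤ 0 := mul_nonpos_of_nonneg_of_nonpos ht0 hgj
              have := le_trans this (ha j)
              simpa using sub_nonneg.mpr (le_trans (by linarith : t * g j ≤ a j) le_rfl)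
          · have hzero : a i₁ - t * g i₁ = 0 := by
              rw [ht, div_mul_cancel₀ _ hgi₁.ne']; ring
            have hsum : (∑ j ∈ s, (a j - t * g j) • v j)
                = ∑ j ∈ s, a j • v j := by
              have : (∑ j ∈ s, (a j - t * g j) • v j)
                  = (∑ j ∈ s, a j • v j) - t • (∑ j ∈ s, g j • v j) := by
                rw [Finset.smul_sum, ← Finset.sum_sub_distrib]
                exact Finset.sum_congr rfl fun j _ => by
                  rw [sub_smul, smul_smul]
              rw [this, hgsum, smul_zero, sub_zero]
            rw [← hsum, ← Finset.add_sum_erase s _ (hTs i₁ hi₁T), hzero, zero_smul,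
              zero_add]
        · rintro ⟨i, hiT, c, hc, rfl⟩
          refine ⟨fun j => if j = i then 0 else c j, ?_, ?_⟩
          · intro j; dsimp only; split
            · exact le_rfl
            · exact hc j
          · rw [← Finset.add_sum_erase s _ (hTs i hiT)]
            dsimp only
            rw [if_pos rfl, zero_smul, zero_add]
            exact (Finset.sum_congr rfl fun j hj => by
              rw [if_neg (Finset.ne_of_mem_erase hj)]).symm
      rw [hunion]
      exact Set.Finite.isClosed_biUnion T.finite_toSet fun i hi =>
        ih _ (Finset.erase_ssubset (hTs i hi))

open Matrix Finset

section Farkas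

/-- Farkas-type lemma: if `d` is nonnegative on the dual cone of the finite family `w`,
then `d` is a nonnegative combination of the `w i`. -/
theorem farkas_combination {m : ℕ} {ι : Type*} [Fintype ι] [DecidableEq ι]
    (w : ι → (Fin m → ℝ)) (d : Fin m → ℝ)
    (hd : ∀ r : Fin m → ℝ, (∀ i, 0 ≤ w i ⬝ᵥ r) → 0 ≤ d ⬝ᵥ r) :
    ∃ c : ι → ℝ, 0 ≤ c ∧ d = ∑ i, c i • w i := by
  classical
  set E := EuclideanSpace ℝ (Fin m)
  let L : E ≃ₗ[ℝ] (Fin m → ℝ) := WithLp.linearEquiv 2 ℝ (Fin m → ℝ)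
  set v : ι → E := fun i => L.symm (w i) with hv
  set K : Set E := {x : E | ∃ c : ι → ℝ, 0 ≤ c ∧ x = ∑ i, c i • v i} with hK
  have hKclosed : IsClosed K := isClosed_coneGen v Finset.univ
  have hKmem : ∀ i, v i ∈ K := by
    intro i
    refine ⟨Pi.single i 1, ?_, ?_⟩
    · intro j
      by_cases hji : j = i <;> simp [Pi.single_apply, hji]
    · simp [Pi.single_apply, ite_smul, Finset.sum_ite_eq']
  have hK0 : (0 : E) ∈ K := ⟨0, le_rfl, by simp⟩
  by_cases hdK : L.symm d ∈ K
  · obtain ⟨c, hc, hsum⟩ := hdK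
    refine ⟨c, hc, ?_⟩
    have := congrArg L hsum
    rw [L.apply_symm_apply, map_sum] at this
    simpa [hv, _root_.map_smul] using this
  · -- separate
    let C : ConvexCone ℝ E :=
      { carrier := K
        smul_mem' := by
          rintro t ht x ⟨c, hc, rfl⟩
          refine ⟨fun i => t * c i, fun i => mul_nonneg ht.le (hc i), ?_⟩
          rw [Finset.smul_sum]
          exact Finset.sum_congr rfl fun i _ => by dsimp only; rw [smul_smul]
        add_mem' := by
          rintro x ⟨c, hc, rfl⟩ y ⟨c', hc', rfl⟩
          refine ⟨c + c', fun i => add_nonneg (hc i) (hc' i), ?_⟩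
          rw [← Finset.sum_add_distrib]
          exact Finset.sum_congr rfl fun i _ => by
            rw [Pi.add_apply, add_smul] }
    obtain ⟨y, hy1, hy2⟩ : ∃ y : E, (∀ x ∈ K, 0 ≤ (inner ℝ x y : ℝ)) ∧
        (inner ℝ y (L.symm d) : ℝ) < 0 := by
      let P : ProperCone ℝ E :=
        ⟨{ carrier := K
           add_mem' := fun hx hy => C.add_mem' hx hy
           zero_mem' := hK0
           smul_mem' := by
             rintro t x ⟨c, hc, rfl⟩
             refine ⟨fun i => (t : ℝ) * c i, fun i => mul_nonneg t.2 (hc i), ?_⟩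
             show (t : ℝ) • ∑ i, c i • v i = _
             rw [Finset.smul_sum]
             exact Finset.sum_congr rfl fun i _ => by dsimp only; rw [smul_smul] }, hKclosed⟩
      obtain ⟨y, hy1, hy2⟩ := ProperCone.hyperplane_separation' P (x₀ := L.symm d) hdK
      exact ⟨y, hy1, by rw [real_inner_comm]; exact hy2⟩
    exfalso
    set r : Fin m → ℝ := L y with hr
    have hinner : ∀ x : Fin m → ℝ, (inner ℝ (L.symm x) y : ℝ) = x ⬝ᵥ r := by
      intro x
      simp only [L, hr, dotProduct]
      rw [PiLp.inner_apply]; simp only [RCLike.inner_apply, conj_trivial]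
      exact Finset.sum_congr rfl fun i _ => mul_comm _ _
    have hray : ∀ i, 0 ≤ w i ⬝ᵥ r := by
      intro i
      have := hy1 (v i) (hKmem i)
      rwa [hv, hinner] at this
    have h1 : 0 ≤ d ⬝ᵥ r := hd r hray
    have h2 : (inner ℝ y (L.symm d) : ℝ) = d ⬝ᵥ r := by
      rw [real_inner_comm]; exact hinner d
    rw [h2] at hy2
    linarith

end Farkas

open Matrix

/-- Unboundedness characterization for the Benders subproblem. -/
theorem subproblem_unbounded_iff (p m : ℕ)
    (G : Matrix (Fin m) (Fin p) ℝ) (h : Fin p → ℝ)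
    (hQ : {u : Fin m → ℝ | 0 ≤ u ∧ h ≤ Gᵀ.mulVec u}.Nonempty) :
    ∀ d : Fin m → ℝ,
      (¬ BddBelow ((fun u => d ⬝ᵥ u) '' {u : Fin m → ℝ | 0 ≤ u ∧ h ≤ Gᵀ.mulVec u}) ↔
        ∃ r : Fin m → ℝ, 0 ≤ r ∧ 0 ≤ Gᵀ.mulVec r ∧ d ⬝ᵥ r < 0) := by
  classical
  intro d
  constructor
  · -- hard direction via Farkas
    intro hnb
    by_contra hno
    push_neg at hno
    apply hnb
    -- Farkas setup
    set w : (Fin p ⊕ Fin m) → (Fin m → ℝ) :=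
      Sum.elim (fun j => fun i => G i j) (fun i => Pi.single i 1) with hw
    have hd : ∀ r : Fin m → ℝ, (∀ i, 0 ≤ w i ⬝ᵥ r) → 0 ≤ d ⬝ᵥ r := by
      intro r hray
      have hr0 : 0 ≤ r := by
        intro i
        have := hray (Sum.inr i)
        simpa [hw, dotProduct, Pi.single_apply] using this
      have hrG : 0 ≤ Gᵀ.mulVec r := by
        intro j
        have := hray (Sum.inl j)
        simpa [hw, dotProduct, Matrix.mulVec, Matrix.transpose_apply] using this
      exact hno r hr0 hrG
    obtain ⟨c, hc, hdc⟩ := farkas_combination w d hd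
    set y : Fin p → ℝ := fun j => c (Sum.inl j) with hy
    set z : Fin m → ℝ := fun i => c (Sum.inr i) with hz
    have hdecomp : d = G.mulVec y + z := by
      rw [hdc]
      funext k
      rw [Fintype.sum_sum_type]
      simp only [Pi.add_apply, Finset.sum_apply, Pi.smul_apply, smul_eq_mul]
      congr 1
      · simp [hw, hy, Matrix.mulVec, dotProduct, mul_comm]
      · simp [hw, hz, Pi.single_apply, mul_ite, Finset.sum_ite_eq']
    refine ⟨y ⬝ᵥ h, ?_⟩
    rintro x ⟨u, ⟨hu0, huG⟩, rfl⟩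
    dsimp only
    have step1 : d ⬝ᵥ u = (G.mulVec y) ⬝ᵥ u + z ⬝ᵥ u := by
      rw [hdecomp, add_dotProduct]
    have step2 : (G.mulVec y) ⬝ᵥ u = y ⬝ᵥ (Gᵀ.mulVec u) := by
      rw [Matrix.dotProduct_mulVec, Matrix.vecMul_transpose]
    have step3 : y ⬝ᵥ h ≤ y ⬝ᵥ (Gᵀ.mulVec u) := by
      apply Finset.sum_le_sum
      intro j _
      exact mul_le_mul_of_nonneg_left (huG j) (hc (Sum.inl j))
    have step4 : 0 ≤ z ⬝ᵥ u :=
      Finset.sum_nonneg fun i _ => mul_nonneg (hc (Sum.inr i)) (hu0 i)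
    rw [step1, step2]
    linarith
  · -- easy direction: ride the ray
    rintro ⟨r, hr0, hrG, hrd⟩
    rw [not_bddBelow_iff]
    intro b
    obtain ⟨u₀, hu₀0, hu₀G⟩ := hQ
    set t : ℝ := max 0 ((b - 1 - d ⬝ᵥ u₀) / (d ⬝ᵥ r)) with htdef
    have ht0 : 0 ≤ t := le_max_left _ _
    refine ⟨d ⬝ᵥ (u₀ + t • r), ⟨u₀ + t • r, ⟨?_, ?_⟩, rfl⟩, ?_⟩
    · exact add_nonneg hu₀0 (smul_nonneg ht0 hr0)
    · rw [Matrix.mulVec_add, Matrix.mulVec_smul]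
      calc h ≤ Gᵀ.mulVec u₀ := hu₀G
        _ ≤ Gᵀ.mulVec u₀ + t • Gᵀ.mulVec r :=
          le_add_of_nonneg_right (smul_nonneg ht0 hrG)
    · have hval : d ⬝ᵥ (u₀ + t • r) = d ⬝ᵥ u₀ + t * (d ⬝ᵥ r) := by
        rw [dotProduct_add, dotProduct_smul, smul_eq_mul]
      have hq : (b - 1 - d ⬝ᵥ u₀) / (d ⬝ᵥ r) ≤ t := le_max_right _ _
      have : t * (d ⬝ᵥ r) ≤ ((b - 1 - d ⬝ᵥ u₀) / (d ⬝ᵥ r)) * (d ⬝ᵥ r) :=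
        mul_le_mul_of_nonpos_right hq hrd.le
      rw [div_mul_cancel₀ _ hrd.ne] at this
      rw [hval]
      linarith
end

section
/- Attainment of the subproblem at an extreme point: Assume Q := {u ∈ ℝ^m : u ≥ 0 and Gᵀ u ≥ h} is nonempty, and let d ∈ ℝ^m satisfy dᵀ r ≥ 0 for every r ∈ ℝ^m with r ≥ 0 and Gᵀ r ≥ 0. Then there exists an extreme point u* of Q such that dᵀ u* = inf {dᵀ u : u ∈ Q}; in particular the infimum is attained and equals the minimum of dᵀ u over the extreme points of Q. -/
open Matrix Finset

open scoped Classical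

noncomputable section BendersAux

variable {p m : ℕ}

/-- Combined constraint functional: rows of [I; Gᵀ]. -/
def fk (G : Matrix (Fin m) (Fin p) ℝ) (k : Fin m ⊕ Fin p) (u : Fin m → ℝ) : ℝ :=
  Sum.elim u (Gᵀ.mulVec u) k

/-- Combined right-hand side. -/
def bk (h : Fin p → ℝ) (k : Fin m ⊕ Fin p) : ℝ := Sum.elim 0 h k

def Qset (G : Matrix (Fin m) (Fin p) ℝ) (h : Fin p → ℝ) : Set (Fin m → ℝ) :=
  {u | 0 ≤ u ∧ h ≤ Gᵀ.mulVec u}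

/-- Tight constraint set. -/
def tset (G : Matrix (Fin m) (Fin p) ℝ) (h : Fin p → ℝ) (u : Fin m → ℝ) :
    Finset (Fin m ⊕ Fin p) :=
  Finset.univ.filter fun k => fk G k u = bk h k

variable {G : Matrix (Fin m) (Fin p) ℝ} {h : Fin p → ℝ}

lemma mem_tset {u : Fin m → ℝ} {k : Fin m ⊕ Fin p} :
    k ∈ tset G h u ↔ fk G k u = bk h k := by simp [tset]

lemma mem_Qset_iff {u : Fin m → ℝ} :
    u ∈ Qset G h ↔ ∀ k, bk h k ≤ fk G k u := by
  constructor
  · rintro ⟨h1, h2⟩ (i | j)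
    · exact h1 i
    · exact h2 j
  · intro H
    exact ⟨fun i => H (Sum.inl i), fun j => H (Sum.inr j)⟩

lemma fk_add (k : Fin m ⊕ Fin p) (u v : Fin m → ℝ) :
    fk G k (u + v) = fk G k u + fk G k v := by
  cases k <;> simp [fk, Matrix.mulVec_add]

lemma fk_smul (k : Fin m ⊕ Fin p) (t : ℝ) (u : Fin m → ℝ) :
    fk G k (t • u) = t * fk G k u := by
  cases k <;> simp [fk, Matrix.mulVec_smul]

lemma fk_neg (k : Fin m ⊕ Fin p) (u : Fin m → ℝ) :
    fk G k (-u) = -(fk G k u) := by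
  have := fk_smul (G := G) k (-1) u
  simpa using this

lemma fk_sub (k : Fin m ⊕ Fin p) (u v : Fin m → ℝ) :
    fk G k (u - v) = fk G k u - fk G k v := by
  rw [sub_eq_add_neg, fk_add, fk_neg]; ring

lemma fk_add_smul (k : Fin m ⊕ Fin p) (u : Fin m → ℝ) (t : ℝ) (w : Fin m → ℝ) :
    fk G k (u + t • w) = fk G k u + t * fk G k w := by
  rw [fk_add, fk_smul]

lemma fk_sub_smul (k : Fin m ⊕ Fin p) (u : Fin m → ℝ) (t : ℝ) (w : Fin m → ℝ) :
    fk G k (u - t • w) = fk G k u - t * fk G k w := by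
  rw [fk_sub, fk_smul]

/-- Step lemma: move along a direction `w` which vanishes on tight constraints and has
some strictly negative row, until a new constraint becomes tight. -/
lemma step_lemma (d u w : Fin m → ℝ)
    (hu : ∀ k, bk h k ≤ fk G k u)
    (htight : ∀ k, fk G k u = bk h k → fk G k w = 0)
    (hdw : d ⬝ᵥ w ≤ 0) (hneg : ∃ k, fk G k w < 0) :
    ∃ u', (∀ k, bk h k ≤ fk G k u') ∧ d ⬝ᵥ u' ≤ d ⬝ᵥ u ∧ tset G h u ⊂ tset G h u' := by
  set S : Finset (Fin m ⊕ Fin p) := Finset.univ.filter (fun k => fk G k w < 0) with hSdef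
  have hS : S.Nonempty := by
    obtain ⟨k, hk⟩ := hneg
    exact ⟨k, by simp [hSdef, hk]⟩
  have hmemS : ∀ k ∈ S, fk G k w < 0 := by intro k hk; simpa [hSdef] using hk
  have hslack : ∀ k ∈ S, bk h k < fk G k u := by
    intro k hk
    rcases lt_or_eq_of_le (hu k) with h' | h'
    · exact h'
    · exact absurd (htight k h'.symm) (ne_of_lt (hmemS k hk))
  set g : (Fin m ⊕ Fin p) → ℝ := fun k => (fk G k u - bk h k) / (-(fk G k w)) with hgdef
  set t0 : ℝ := S.inf' hS g with ht0def
  have ht0pos : 0 < t0 := by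
    rw [ht0def, Finset.lt_inf'_iff]
    intro k hk
    exact div_pos (by linarith [hslack k hk]) (by linarith [hmemS k hk])
  have ht0le : ∀ k ∈ S, t0 * (-(fk G k w)) ≤ fk G k u - bk h k := by
    intro k hk
    have h1 : t0 ≤ g k := Finset.inf'_le g hk
    have h2 : 0 < -(fk G k w) := by linarith [hmemS k hk]
    calc t0 * (-(fk G k w)) ≤ g k * (-(fk G k w)) := by
          exact mul_le_mul_of_nonneg_right h1 h2.le
      _ = fk G k u - bk h k := by
          rw [hgdef]; exact div_mul_cancel₀ _ h2.ne'
  refine ⟨u + t0 • w, ?_, ?_, ?_⟩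
  · intro k
    rw [fk_add_smul]
    rcases lt_or_ge (fk G k w) 0 with hkw | hkw
    · have hkS : k ∈ S := by simp [hSdef, hkw]
      have := ht0le k hkS
      nlinarith
    · nlinarith [hu k, mul_nonneg ht0pos.le hkw]
  · have : d ⬝ᵥ (u + t0 • w) = d ⬝ᵥ u + t0 * (d ⬝ᵥ w) := by
      rw [dotProduct_add, dotProduct_smul, smul_eq_mul]
    rw [this]
    nlinarith [mul_nonpos_of_nonneg_of_nonpos ht0pos.le hdw]
  · have hsub : tset G h u ⊆ tset G h (u + t0 • w) := by
      intro k hk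
      rw [mem_tset] at hk ⊢
      rw [fk_add_smul, htight k hk, hk]; ring
    obtain ⟨k0, hk0S, hk0⟩ := Finset.exists_mem_eq_inf' hS g
    have hk0w : fk G k0 w < 0 := hmemS k0 hk0S
    have hk0new : fk G k0 (u + t0 • w) = bk h k0 := by
      rw [fk_add_smul]
      have hne : -(fk G k0 w) ≠ 0 := by linarith
      have : t0 = (fk G k0 u - bk h k0) / (-(fk G k0 w)) := by rw [ht0def, hk0]
      rw [this, div_neg, neg_mul, div_mul_cancel₀ _ (neg_ne_zero.mp hne)]
      ring
    have hk0old : k0 ∉ tset G h u := by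
      rw [mem_tset]
      intro hcon
      exact absurd (htight k0 hcon) (ne_of_lt hk0w)
    rw [Finset.ssubset_iff_of_subset hsub]
    exact ⟨k0, mem_tset.mpr hk0new, hk0old⟩

/-- From a non-extreme point, get a nonzero direction vanishing on tight constraints. -/
lemma exists_dir (u : Fin m → ℝ) (hu : u ∈ Qset G h)
    (hne : u ∉ Set.extremePoints ℝ (Qset G h)) :
    ∃ w : Fin m → ℝ, w ≠ 0 ∧ ∀ k, fk G k u = bk h k → fk G k w = 0 := by
  rw [mem_extremePoints] at hne
  push_neg at hne
  obtain ⟨x, hx, y, hy, hseg, hxy⟩ := hne hu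
  obtain ⟨a, b, ha, hb, hab, habu⟩ := hseg
  have key : ∀ z : Fin m → ℝ, z ∈ Qset G h →
      (∀ c : ℝ, 0 < c → (∀ k, c * fk G k z ≤ c * fk G k u + (fk G k u - fk G k z) * 0) → True) →
      True := fun _ _ _ => trivial
  -- helper showing tight constraints are tight at both x and y
  have tight_comb : ∀ k, fk G k u = bk h k → fk G k x = bk h k ∧ fk G k y = bk h k := by
    intro k hk
    have e1 : a * fk G k x + b * fk G k y = fk G k u := by
      rw [← hk] at *
      calc a * fk G k x + b * fk G k y = fk G k (a • x + b • y) := by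
            rw [fk_add, fk_smul, fk_smul]
        _ = fk G k u := by rw [habu]
    have hfx := (mem_Qset_iff.mp hx) k
    have hfy := (mem_Qset_iff.mp hy) k
    have hbb : a * bk h k + b * bk h k = bk h k := by
      rw [← add_mul, hab, one_mul]
    constructor
    · have h2 : a * fk G k x ≤ a * bk h k := by
        nlinarith [mul_le_mul_of_nonneg_left hfy hb.le]
      have h3 : fk G k x ≤ bk h k := le_of_mul_le_mul_left h2 ha
      linarith
    · have h2 : b * fk G k y ≤ b * bk h k := by
        nlinarith [mul_le_mul_of_nonneg_left hfx ha.le]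
      have h3 : fk G k y ≤ bk h k := le_of_mul_le_mul_left h2 hb
      linarith
  by_cases hxu : x = u
  · refine ⟨y - u, sub_ne_zero.mpr (hxy hxu), ?_⟩
    intro k hk
    rw [fk_sub, (tight_comb k hk).2, hk, sub_self]
  · refine ⟨x - u, sub_ne_zero.mpr hxu, ?_⟩
    intro k hk
    rw [fk_sub, (tight_comb k hk).1, hk, sub_self]

/-- Descend: from a non-extreme feasible point, find a feasible point with no larger
objective and strictly more tight constraints. -/
lemma descend (d : Fin m → ℝ)
    (hd : ∀ r : Fin m → ℝ, 0 ≤ r → 0 ≤ Gᵀ.mulVec r → 0 ≤ d ⬝ᵥ r)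
    (u : Fin m → ℝ) (hu : u ∈ Qset G h)
    (hne : u ∉ Set.extremePoints ℝ (Qset G h)) :
    ∃ u'' ∈ Qset G h, d ⬝ᵥ u'' ≤ d ⬝ᵥ u ∧ tset G h u ⊂ tset G h u'' := by
  obtain ⟨w, hw0, hwt⟩ := exists_dir u hu hne
  have key : ∀ w1 : Fin m → ℝ, (∀ k, fk G k u = bk h k → fk G k w1 = 0) →
      d ⬝ᵥ w1 ≤ 0 → (∃ k, fk G k w1 < 0) →
      ∃ u'' ∈ Qset G h, d ⬝ᵥ u'' ≤ d ⬝ᵥ u ∧ tset G h u ⊂ tset G h u'' := by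
    intro w1 h1 h2 h3
    obtain ⟨u', hu', hle, hss⟩ := step_lemma d u w1 (mem_Qset_iff.mp hu) h1 h2 h3
    exact ⟨u', mem_Qset_iff.mpr hu', hle, hss⟩
  set w0 : Fin m → ℝ := if d ⬝ᵥ w ≤ 0 then w else -w with hw0def
  have hw0ne : w0 ≠ 0 := by
    rw [hw0def]; split
    · exact hw0
    · exact neg_ne_zero.mpr hw0
  have hw0t : ∀ k, fk G k u = bk h k → fk G k w0 = 0 := by
    intro k hk
    rw [hw0def]; split
    · exact hwt k hk
    · rw [fk_neg, hwt k hk, neg_zero]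
  have hw0d : d ⬝ᵥ w0 ≤ 0 := by
    rw [hw0def]; split
    · assumption
    · rw [dotProduct_neg]; linarith [lt_of_not_ge (by assumption : ¬ d ⬝ᵥ w ≤ 0)]
  by_cases hneg : ∃ k, fk G k w0 < 0
  · exact key w0 hw0t hw0d hneg
  · push_neg at hneg
    have hw0nn : 0 ≤ w0 := fun i => by simpa [fk] using hneg (Sum.inl i)
    have hGw0 : 0 ≤ Gᵀ.mulVec w0 := fun j => by simpa [fk] using hneg (Sum.inr j)
    have hdw0 : 0 ≤ d ⬝ᵥ w0 := hd w0 hw0nn hGw0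
    have hdz : d ⬝ᵥ (-w0) ≤ 0 := by rw [dotProduct_neg]; linarith
    have hnt : ∀ k, fk G k u = bk h k → fk G k (-w0) = 0 := by
      intro k hk; rw [fk_neg, hw0t k hk, neg_zero]
    obtain ⟨i, hi⟩ := Function.ne_iff.mp hw0ne
    have hipos : 0 < w0 i := lt_of_le_of_ne (hw0nn i) (by simpa using (Ne.symm hi))
    have : fk G (Sum.inl i) (-w0) < 0 := by simpa [fk] using neg_neg_iff_pos.mpr hipos
    exact key (-w0) hnt hdz ⟨Sum.inl i, this⟩

/-- Purification: every feasible point dominates an extreme point. -/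
lemma purify (d : Fin m → ℝ)
    (hd : ∀ r : Fin m → ℝ, 0 ≤ r → 0 ≤ Gᵀ.mulVec r → 0 ≤ d ⬝ᵥ r) :
    ∀ u ∈ Qset G h, ∃ u' ∈ Set.extremePoints ℝ (Qset G h), d ⬝ᵥ u' ≤ d ⬝ᵥ u := by
  suffices H : ∀ n : ℕ, ∀ u : Fin m → ℝ,
      (Finset.univ \ tset G h u).card ≤ n → u ∈ Qset G h →
      ∃ u' ∈ Set.extremePoints ℝ (Qset G h), d ⬝ᵥ u' ≤ d ⬝ᵥ u by
    intro u hu; exact H _ u le_rfl hu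
  intro n
  induction n with
  | zero =>
    intro u hcard hu
    by_cases hext : u ∈ Set.extremePoints ℝ (Qset G h)
    · exact ⟨u, hext, le_rfl⟩
    · exfalso
      obtain ⟨u'', _, _, hss⟩ := descend d hd u hu hext
      have h0 : Finset.univ \ tset G h u = ∅ := Finset.card_eq_zero.mp (Nat.le_zero.mp hcard)
      have huniv : (Finset.univ : Finset (Fin m ⊕ Fin p)) ⊆ tset G h u :=
        Finset.sdiff_eq_empty_iff_subset.mp h0
      exact hss.not_subset ((Finset.subset_univ _).trans huniv)
  | succ n ih =>
    intro u hcard hu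
    by_cases hext : u ∈ Set.extremePoints ℝ (Qset G h)
    · exact ⟨u, hext, le_rfl⟩
    · obtain ⟨u'', hu'', hle, hss⟩ := descend d hd u hu hext
      have hlt : (Finset.univ \ tset G h u'').card < (Finset.univ \ tset G h u).card := by
        have e1 : (Finset.univ \ tset G h u).card =
            Fintype.card (Fin m ⊕ Fin p) - (tset G h u).card := by
          rw [Finset.card_sdiff_of_subset (Finset.subset_univ _), Finset.card_univ]
        have e2 : (Finset.univ \ tset G h u'').card =
            Fintype.card (Fin m ⊕ Fin p) - (tset G h u'').card := by
          rw [Finset.card_sdiff_of_subset (Finset.subset_univ _), Finset.card_univ]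
        have h3 : (tset G h u).card < (tset G h u'').card := Finset.card_lt_card hss
        have h4 : (tset G h u'').card ≤ Fintype.card (Fin m ⊕ Fin p) := by
          rw [← Finset.card_univ]; exact Finset.card_le_card (Finset.subset_univ _)
        omega
      obtain ⟨u', hu', hle'⟩ := ih u'' (by omega) hu''
      exact ⟨u', hu', hle'.trans hle⟩

/-- Perturbation: direction vanishing on tight constraints can be followed both ways. -/
lemma perturb (u w : Fin m → ℝ) (hu : ∀ k, bk h k ≤ fk G k u)
    (ht : ∀ k, fk G k u = bk h k → fk G k w = 0) :
    ∃ δ : ℝ, 0 < δ ∧ (∀ k, bk h k ≤ fk G k (u + δ • w)) ∧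
      (∀ k, bk h k ≤ fk G k (u - δ • w)) := by
  set S : Finset (Fin m ⊕ Fin p) := Finset.univ.filter (fun k => fk G k w ≠ 0) with hSdef
  have hmemS : ∀ k, k ∈ S ↔ fk G k w ≠ 0 := by intro k; simp [hSdef]
  by_cases hS : S.Nonempty
  · have hslack : ∀ k ∈ S, bk h k < fk G k u := by
      intro k hk
      rcases lt_or_eq_of_le (hu k) with h' | h'
      · exact h'
      · exact absurd (ht k h'.symm) ((hmemS k).mp hk)
    set g : (Fin m ⊕ Fin p) → ℝ := fun k => (fk G k u - bk h k) / (2 * |fk G k w|) with hgdef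
    set δ : ℝ := S.inf' hS g with hδdef
    have hδpos : 0 < δ := by
      rw [hδdef, Finset.lt_inf'_iff]
      intro k hk
      have h1 : 0 < |fk G k w| := abs_pos.mpr ((hmemS k).mp hk)
      exact div_pos (by linarith [hslack k hk]) (by linarith)
    have hbound : ∀ k, δ * |fk G k w| ≤ (fk G k u - bk h k) / 2 := by
      intro k
      by_cases hk : fk G k w = 0
      · rw [hk, abs_zero, mul_zero]
        linarith [hu k]
      · have hkS : k ∈ S := (hmemS k).mpr hk
        have h1 : δ ≤ g k := Finset.inf'_le g hkS
        have h2 : 0 < |fk G k w| := abs_pos.mpr hk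
        have h3 : δ * (2 * |fk G k w|) ≤ fk G k u - bk h k := by
          calc δ * (2 * |fk G k w|) ≤ g k * (2 * |fk G k w|) :=
                mul_le_mul_of_nonneg_right h1 (by linarith)
            _ = fk G k u - bk h k := by rw [hgdef]; field_simp
        linarith
    refine ⟨δ, hδpos, ?_, ?_⟩
    · intro k
      rw [fk_add_smul]
      have h1 := hbound k
      have h2 : δ * (-(|fk G k w|)) ≤ δ * fk G k w :=
        mul_le_mul_of_nonneg_left (neg_abs_le _) hδpos.le
      have h3 : δ * (-(|fk G k w|)) = -(δ * |fk G k w|) := by ring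
      linarith [hu k]
    · intro k
      rw [fk_sub_smul]
      have h1 := hbound k
      have h2 : δ * fk G k w ≤ δ * |fk G k w| :=
        mul_le_mul_of_nonneg_left (le_abs_self _) hδpos.le
      linarith [hu k]
  · refine ⟨1, one_pos, ?_, ?_⟩ <;> intro k <;>
      [rw [fk_add_smul]; rw [fk_sub_smul]] <;>
      have hk : fk G k w = 0 := by
        by_contra hc
        exact hS ⟨k, (hmemS k).mpr hc⟩
    · rw [hk]; simpa using hu k
    · rw [hk]; simpa using hu k

/-- Extreme points of the dual polyhedron are finite. -/
lemma extremePoints_finite : (Set.extremePoints ℝ (Qset G h)).Finite := by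
  have hinj : Set.InjOn (tset G h) (Set.extremePoints ℝ (Qset G h)) := by
    intro u hu v hv htv
    by_contra hne
    have hw : v - u ≠ 0 := sub_ne_zero.mpr (Ne.symm hne)
    have huQ : u ∈ Qset G h := hu.1
    have hvQ : v ∈ Qset G h := hv.1
    have hwt : ∀ k, fk G k u = bk h k → fk G k (v - u) = 0 := by
      intro k hk
      have hkv : k ∈ tset G h v := htv ▸ mem_tset.mpr hk
      rw [fk_sub, mem_tset.mp hkv, hk, sub_self]
    obtain ⟨δ, hδpos, hp1, hp2⟩ := perturb u (v - u) (mem_Qset_iff.mp huQ) hwt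
    have hx : u - δ • (v - u) ∈ Qset G h := mem_Qset_iff.mpr hp2
    have hy : u + δ • (v - u) ∈ Qset G h := mem_Qset_iff.mpr hp1
    have hseg : u ∈ openSegment ℝ (u - δ • (v - u)) (u + δ • (v - u)) := by
      refine ⟨1/2, 1/2, by norm_num, by norm_num, by norm_num, ?_⟩
      module
    have := (mem_extremePoints.mp hu).2 _ hx _ hy hseg
    have h1 : u - δ • (v - u) = u := this.1
    have h2 : δ • (v - u) = 0 := sub_eq_self.mp h1
    exact hw (by
      rcases smul_eq_zero.mp h2 with hδ | hww
      · exact absurd hδ (ne_of_gt hδpos)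
      · exact hww)
  exact Set.Finite.of_finite_image (Set.toFinite _) hinj

end BendersAux

open Matrix

/-- Attainment of the Benders subproblem at an extreme point of the dual polyhedron. -/
theorem subproblem_attained_at_extreme_point (p m : ℕ)
    (G : Matrix (Fin m) (Fin p) ℝ) (h : Fin p → ℝ)
    (hQ : {u : Fin m → ℝ | 0 ≤ u ∧ h ≤ Gᵀ.mulVec u}.Nonempty)
    (d : Fin m → ℝ)
    (hd : ∀ r : Fin m → ℝ, 0 ≤ r → 0 ≤ Gᵀ.mulVec r → 0 ≤ d ⬝ᵥ r) :
    ∃ ustar ∈ Set.extremePoints ℝ {u : Fin m → ℝ | 0 ≤ u ∧ h ≤ Gᵀ.mulVec u},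
      d ⬝ᵥ ustar = sInf ((fun u => d ⬝ᵥ u) '' {u : Fin m → ℝ | 0 ≤ u ∧ h ≤ Gᵀ.mulVec u}) ∧
      ∀ v ∈ Set.extremePoints ℝ {u : Fin m → ℝ | 0 ≤ u ∧ h ≤ Gᵀ.mulVec u},
        d ⬝ᵥ ustar ≤ d ⬝ᵥ v := by
  have hset : {u : Fin m → ℝ | 0 ≤ u ∧ h ≤ Gᵀ.mulVec u} = Qset G h := rfl
  rw [hset]
  obtain ⟨u0, hu0⟩ := hQ
  obtain ⟨e0, he0, _⟩ := purify d hd u0 hu0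
  obtain ⟨ustar, hustar, hmin⟩ :=
    Set.exists_min_image _ (fun u => d ⬝ᵥ u) extremePoints_finite ⟨e0, he0⟩
  have hlb : ∀ u ∈ Qset G h, d ⬝ᵥ ustar ≤ d ⬝ᵥ u := by
    intro u hu
    obtain ⟨u', hu', hle⟩ := purify d hd u hu
    exact (hmin u' hu').trans hle
  have hleast : IsLeast ((fun u => d ⬝ᵥ u) '' Qset G h) (d ⬝ᵥ ustar) := by
    constructor
    · exact ⟨ustar, hustar.1, rfl⟩
    · rintro _ ⟨u, hu, rfl⟩
      exact hlb u hu
  exact ⟨ustar, hustar, hleast.csInf_eq.symm, fun v hv => hmin v hv⟩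
end

section
/- Sufficiency of cuts at extreme points and recession directions: Assume Q := {u ∈ ℝ^m : u ≥ 0 and Gᵀ u ≥ h} is nonempty. Let d ∈ ℝ^m and t ∈ ℝ. If dᵀ u ≥ t for every extreme point u of Q and dᵀ r ≥ 0 for every r ∈ ℝ^m with r ≥ 0 and Gᵀ r ≥ 0, then dᵀ u ≥ t for every u ∈ Q. -/
open Matrix

variable {p m : ℕ}

/-- Slack of constraint `k` at point `u`. -/
def auxVal (G : Matrix (Fin m) (Fin p) ℝ) (h : Fin p → ℝ) (u : Fin m → ℝ) :
    Fin m ⊕ Fin p → ℝ :=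
  Sum.elim u (fun j => Gᵀ.mulVec u j - h j)

/-- Slope of constraint `k` along direction `e`. -/
def auxSl (G : Matrix (Fin m) (Fin p) ℝ) (e : Fin m → ℝ) : Fin m ⊕ Fin p → ℝ :=
  Sum.elim e (Gᵀ.mulVec e)

lemma auxVal_mem (G : Matrix (Fin m) (Fin p) ℝ) (h : Fin p → ℝ) (u : Fin m → ℝ) :
    u ∈ {u : Fin m → ℝ | 0 ≤ u ∧ h ≤ Gᵀ.mulVec u} ↔ ∀ k, 0 ≤ auxVal G h u k := by
  constructor
  · rintro ⟨h1, h2⟩ (i | j)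
    · simpa [auxVal] using h1 i
    · simpa [auxVal] using h2 j
  · intro hk
    refine ⟨fun i => by simpa [auxVal] using hk (Sum.inl i), fun j => by
      have := hk (Sum.inr j); simp [auxVal] at this; linarith⟩

lemma auxVal_affine (G : Matrix (Fin m) (Fin p) ℝ) (h : Fin p → ℝ) (u e : Fin m → ℝ)
    (s : ℝ) (k : Fin m ⊕ Fin p) :
    auxVal G h (u + s • e) k = auxVal G h u k + s * auxSl G e k := by
  cases k with
  | inl i => simp [auxVal, auxSl, smul_eq_mul]
  | inr j => simp [auxVal, auxSl, mulVec_add, mulVec_smul, smul_eq_mul]; ring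

lemma auxVal_combo (G : Matrix (Fin m) (Fin p) ℝ) (h : Fin p → ℝ) (x y : Fin m → ℝ)
    (a b : ℝ) (hab : a + b = 1) (k : Fin m ⊕ Fin p) :
    auxVal G h (a • x + b • y) k = a * auxVal G h x k + b * auxVal G h y k := by
  have hb : b = 1 - a := by linarith
  subst hb
  cases k with
  | inl i => simp [auxVal, smul_eq_mul]
  | inr j => simp [auxVal, mulVec_add, mulVec_smul, smul_eq_mul]; ring

lemma auxSl_sub (G : Matrix (Fin m) (Fin p) ℝ) (h : Fin p → ℝ) (x y : Fin m → ℝ)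
    (k : Fin m ⊕ Fin p) :
    auxSl G (y - x) k = auxVal G h y k - auxVal G h x k := by
  cases k with
  | inl i => simp [auxVal, auxSl]
  | inr j => simp [auxVal, auxSl, mulVec_sub]

lemma auxSl_neg (G : Matrix (Fin m) (Fin p) ℝ) (e : Fin m → ℝ) (k : Fin m ⊕ Fin p) :
    auxSl G (-e) k = - auxSl G e k := by
  cases k with
  | inl i => simp [auxSl]
  | inr j => simp [auxSl, mulVec_neg]

/-- Set of tight constraints. -/
noncomputable def auxT (G : Matrix (Fin m) (Fin p) ℝ) (h : Fin p → ℝ) (u : Fin m → ℝ) :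
    Finset (Fin m ⊕ Fin p) := by
  classical exact Finset.univ.filter (fun k => auxVal G h u k = 0)

lemma auxT_mem (G : Matrix (Fin m) (Fin p) ℝ) (h : Fin p → ℝ) (u : Fin m → ℝ)
    (k : Fin m ⊕ Fin p) : k ∈ auxT G h u ↔ auxVal G h u k = 0 := by
  classical simp [auxT]

lemma aux_recession (G : Matrix (Fin m) (Fin p) ℝ) (h : Fin p → ℝ) (u e : Fin m → ℝ)
    (hu : ∀ k, 0 ≤ auxVal G h u k)
    (hall : ∀ s : ℝ, 0 ≤ s → ∀ k, 0 ≤ auxVal G h (u + s • e) k) :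
    ∀ k, 0 ≤ auxSl G e k := by
  intro k
  by_contra hneg
  push_neg at hneg
  set B := auxSl G e k with hB
  set A := auxVal G h u k with hA
  have hApos : (0:ℝ) < A + 1 := by have := hu k; linarith
  have hs : (0:ℝ) ≤ (A + 1) / (-B) := le_of_lt (div_pos hApos (by linarith))
  have := hall ((A + 1) / (-B)) hs k
  rw [auxVal_affine] at this
  have hBne : -B ≠ 0 := by linarith
  have : 0 ≤ A + ((A + 1) / (-B)) * B := this
  have heq : ((A + 1) / (-B)) * B = -(A + 1) := by field_simp; rw [div_self (show B ≠ 0 by linarith)]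
  linarith [heq ▸ this]

lemma aux_interp {A B s s₁ : ℝ} (hA : 0 ≤ A) (hs : 0 ≤ A + s * B) (h0 : 0 ≤ s₁)
    (h1 : s₁ ≤ s) : 0 ≤ A + s₁ * B := by
  rcases le_or_gt 0 B with hB | hB
  · nlinarith
  · nlinarith

lemma aux_push (G : Matrix (Fin m) (Fin p) ℝ) (h : Fin p → ℝ) (d : Fin m → ℝ)
    (u e : Fin m → ℝ) (hu : ∀ k, 0 ≤ auxVal G h u k) (hde : d ⬝ᵥ e ≤ 0)
    (heT : ∀ k, auxVal G h u k = 0 → auxSl G e k = 0)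
    (hnall : ¬ ∀ s : ℝ, 0 ≤ s → ∀ k, 0 ≤ auxVal G h (u + s • e) k) :
    ∃ u', (∀ k, 0 ≤ auxVal G h u' k) ∧ d ⬝ᵥ u' ≤ d ⬝ᵥ u ∧ auxT G h u ⊂ auxT G h u' := by
  classical
  push_neg at hnall
  obtain ⟨s₁, hs₁0, k₁, hk₁⟩ := hnall
  set S : Set ℝ := {s : ℝ | 0 ≤ s ∧ ∀ k, 0 ≤ auxVal G h (u + s • e) k} with hS
  have hS0 : (0:ℝ) ∈ S := ⟨le_refl 0, fun k => by simpa [auxVal_affine] using hu k⟩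
  have hSne : S.Nonempty := ⟨0, hS0⟩
  have hub : ∀ s ∈ S, s ≤ s₁ := by
    intro s hsS
    by_contra hgt
    push_neg at hgt
    have h2 := hsS.2 k₁
    rw [auxVal_affine] at h2 hk₁
    have := aux_interp (hu k₁) h2 hs₁0 (le_of_lt hgt)
    linarith
  have hbdd : BddAbove S := ⟨s₁, hub⟩
  set σ := sSup S with hσ
  have hσ0 : 0 ≤ σ := le_csSup hbdd hS0
  have hσS : ∀ k, 0 ≤ auxVal G h u k + σ * auxSl G e k := by
    intro k
    rcases lt_or_ge (auxSl G e k) 0 with hsl | hsl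
    · have hle : σ ≤ auxVal G h u k / (-auxSl G e k) := by
        apply csSup_le hSne
        intro s hsS
        have := hsS.2 k
        rw [auxVal_affine] at this
        rw [le_div_iff₀ (by linarith)]
        nlinarith
      rw [le_div_iff₀ (by linarith)] at hle
      nlinarith
    · nlinarith [mul_nonneg hσ0 hsl, hu k]
  set u' := u + σ • e with hu'
  have hu'val : ∀ k, auxVal G h u' k = auxVal G h u k + σ * auxSl G e k := fun k =>
    auxVal_affine G h u e σ k
  have hu'Q : ∀ k, 0 ≤ auxVal G h u' k := fun k => (hu'val k) ▸ hσS k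
  have hdot : d ⬝ᵥ u' = d ⬝ᵥ u + σ * (d ⬝ᵥ e) := by
    simp [hu', dotProduct_add, dotProduct_smul, smul_eq_mul]
  have hsub : auxT G h u ⊆ auxT G h u' := by
    intro k hk
    rw [auxT_mem] at hk ⊢
    rw [hu'val k, hk, heT k hk]
    ring
  refine ⟨u', hu'Q, by nlinarith [mul_nonpos_of_nonneg_of_nonpos hσ0 hde], ?_⟩
  rw [Finset.ssubset_iff_subset_ne]
  refine ⟨hsub, ?_⟩
  intro hEq
  -- every constraint tight at u' is tight at u, hence has zero slope
  have htight : ∀ k, auxVal G h u' k = 0 → auxSl G e k = 0 := by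
    intro k hk
    apply heT
    rw [← auxT_mem] at hk ⊢
    rwa [← hEq] at hk
  -- construct a positive step ε that stays feasible
  set f : Fin m ⊕ Fin p → ℝ := fun k =>
    if auxSl G e k < 0 then auxVal G h u' k / (-auxSl G e k) else 1 with hf
  set F : Finset ℝ := insert 1 (Finset.univ.image f) with hF
  have hFne : F.Nonempty := ⟨1, by simp [hF]⟩
  set ε := F.min' hFne with hε
  have hεf : ∀ k, ε ≤ f k := fun k =>
    Finset.min'_le F (f k) (Finset.mem_insert_of_mem (Finset.mem_image_of_mem f (Finset.mem_univ k)))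
  have hεpos : 0 < ε := by
    rw [hε, Finset.lt_min'_iff]
    intro b hb
    rw [hF, Finset.mem_insert] at hb
    rcases hb with hb | hb
    · simp [hb]
    · obtain ⟨k, _, hk⟩ := Finset.mem_image.mp hb
      rw [← hk, hf]
      dsimp only
      split_ifs with hsl
      · have hvne : auxVal G h u' k ≠ 0 := fun h0 => by
          have := htight k h0; linarith
        have hvpos : 0 < auxVal G h u' k := lt_of_le_of_ne (hu'Q k) (Ne.symm hvne)
        exact div_pos hvpos (by linarith)
      · norm_num
  have hmem : σ + ε ∈ S := by
    refine ⟨by linarith, fun k => ?_⟩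
    rw [auxVal_affine]
    have hval : auxVal G h u k + (σ + ε) * auxSl G e k
        = auxVal G h u' k + ε * auxSl G e k := by rw [hu'val k]; ring
    rw [hval]
    rcases lt_or_ge (auxSl G e k) 0 with hsl | hsl
    · have := hεf k
      rw [hf] at this
      dsimp only at this
      rw [if_pos hsl, le_div_iff₀ (by linarith)] at this
      nlinarith
    · nlinarith [mul_nonneg (le_of_lt hεpos) hsl, hu'Q k]
  have := le_csSup hbdd hmem
  linarith

lemma aux_step (G : Matrix (Fin m) (Fin p) ℝ) (h : Fin p → ℝ) (d : Fin m → ℝ)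
    (hray : ∀ r : Fin m → ℝ, 0 ≤ r → 0 ≤ Gᵀ.mulVec r → 0 ≤ d ⬝ᵥ r)
    (u : Fin m → ℝ) (hu : ∀ k, 0 ≤ auxVal G h u k)
    (hne : u ∉ Set.extremePoints ℝ {u : Fin m → ℝ | 0 ≤ u ∧ h ≤ Gᵀ.mulVec u}) :
    ∃ u', (∀ k, 0 ≤ auxVal G h u' k) ∧ d ⬝ᵥ u' ≤ d ⬝ᵥ u ∧ auxT G h u ⊂ auxT G h u' := by
  classical
  have huQ : u ∈ {u : Fin m → ℝ | 0 ≤ u ∧ h ≤ Gᵀ.mulVec u} := (auxVal_mem G h u).mpr hu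
  rw [mem_extremePoints] at hne
  push_neg at hne
  obtain ⟨x, hx, y, hy, hseg, hnxy⟩ := hne huQ
  obtain ⟨a, b, ha, hb, hab, hxy⟩ := hseg
  have hxv := (auxVal_mem G h x).mp hx
  have hyv := (auxVal_mem G h y).mp hy
  -- x ≠ y
  have hxney : x ≠ y := by
    intro hEq
    subst hEq
    have : u = x := by
      rw [← hxy, ← add_smul, hab, one_smul]
    exact hnxy this.symm (by rw [this])
  set w := y - x with hw
  have hwne : w ≠ 0 := sub_ne_zero.mpr (Ne.symm hxney)
  -- tight constraints have zero slope along w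
  have hslw : ∀ k, auxVal G h u k = 0 → auxSl G w k = 0 := by
    intro k hk
    have hcombo : a * auxVal G h x k + b * auxVal G h y k = 0 := by
      rw [← auxVal_combo G h x y a b hab, hxy, hk]
    have hx0 : auxVal G h x k = 0 := by nlinarith [hxv k, hyv k]
    have hy0 : auxVal G h y k = 0 := by nlinarith [hxv k, hyv k]
    rw [auxSl_sub G h x y k, hx0, hy0, sub_zero]
  have hslnw : ∀ k, auxVal G h u k = 0 → auxSl G (-w) k = 0 := by
    intro k hk
    rw [auxSl_neg, hslw k hk, neg_zero]
  -- a direction staying in Q forever is a recession direction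
  have hrec : ∀ z : Fin m → ℝ,
      (∀ s : ℝ, 0 ≤ s → ∀ k, 0 ≤ auxVal G h (u + s • z) k) → 0 ≤ d ⬝ᵥ z := by
    intro z hz
    have hsl := aux_recession G h u z hu hz
    refine hray z ?_ ?_
    · intro i
      simpa [auxSl] using hsl (Sum.inl i)
    · intro j
      simpa [auxSl] using hsl (Sum.inr j)
  -- not both w and -w can stay in Q forever
  have hnotboth : ¬ ((∀ s : ℝ, 0 ≤ s → ∀ k, 0 ≤ auxVal G h (u + s • w) k) ∧
      (∀ s : ℝ, 0 ≤ s → ∀ k, 0 ≤ auxVal G h (u + s • (-w)) k)) := by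
    rintro ⟨h1, h2⟩
    have hs1 := aux_recession G h u w hu h1
    have hs2 := aux_recession G h u (-w) hu h2
    apply hwne
    funext i
    have := hs1 (Sum.inl i)
    have := hs2 (Sum.inl i)
    simp [auxSl] at *
    linarith
  -- choose final direction e
  by_cases hallw : ∀ s : ℝ, 0 ≤ s → ∀ k, 0 ≤ auxVal G h (u + s • w) k
  · -- then d⬝w ≥ 0, use -w
    have hdw : 0 ≤ d ⬝ᵥ w := hrec w hallw
    have hnall : ¬ ∀ s : ℝ, 0 ≤ s → ∀ k, 0 ≤ auxVal G h (u + s • (-w)) k :=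
      fun hc => hnotboth ⟨hallw, hc⟩
    exact aux_push G h d u (-w) hu (by rw [dotProduct_neg]; linarith) hslnw hnall
  · rcases le_or_gt (d ⬝ᵥ w) 0 with hdw | hdw
    · exact aux_push G h d u w hu hdw hslw hallw
    · -- d⬝w > 0 : use -w; -w can't stay forever since d⬝(-w) < 0
      have hnall : ¬ ∀ s : ℝ, 0 ≤ s → ∀ k, 0 ≤ auxVal G h (u + s • (-w)) k := by
        intro hc
        have := hrec (-w) hc
        rw [dotProduct_neg] at this
        linarith
      exact aux_push G h d u (-w) hu (by rw [dotProduct_neg]; linarith) hslnw hnall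

/-- Sufficiency of cuts at extreme points and recession directions. -/
theorem cuts_at_extreme_points_suffice (p m : ℕ)
    (G : Matrix (Fin m) (Fin p) ℝ) (h : Fin p → ℝ)
    (hQ : {u : Fin m → ℝ | 0 ≤ u ∧ h ≤ Gᵀ.mulVec u}.Nonempty)
    (d : Fin m → ℝ) (t : ℝ)
    (hext : ∀ u ∈ Set.extremePoints ℝ {u : Fin m → ℝ | 0 ≤ u ∧ h ≤ Gᵀ.mulVec u}, t ≤ d ⬝ᵥ u)
    (hray : ∀ r : Fin m → ℝ, 0 ≤ r → 0 ≤ Gᵀ.mulVec r → 0 ≤ d ⬝ᵥ r) :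
    ∀ u ∈ {u : Fin m → ℝ | 0 ≤ u ∧ h ≤ Gᵀ.mulVec u}, t ≤ d ⬝ᵥ u := by

  classical
  have hcard_le : ∀ u : Fin m → ℝ, (auxT G h u).card ≤ m + p := by
    intro u
    calc (auxT G h u).card ≤ Fintype.card (Fin m ⊕ Fin p) := Finset.card_le_univ _
    _ = m + p := by simp
  have main : ∀ n : ℕ, ∀ u : Fin m → ℝ, (∀ k, 0 ≤ auxVal G h u k) →
      m + p ≤ (auxT G h u).card + n → t ≤ d ⬝ᵥ u := by
    intro n
    induction n with
    | zero =>
      intro u hu hc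
      by_cases hx : u ∈ Set.extremePoints ℝ {u : Fin m → ℝ | 0 ≤ u ∧ h ≤ Gᵀ.mulVec u}
      · exact hext u hx
      · obtain ⟨u', _, _, hss⟩ := aux_step G h d hray u hu hx
        have := Finset.card_lt_card hss
        have := hcard_le u'
        omega
    | succ n ih =>
      intro u hu hc
      by_cases hx : u ∈ Set.extremePoints ℝ {u : Fin m → ℝ | 0 ≤ u ∧ h ≤ Gᵀ.mulVec u}
      · exact hext u hx
      · obtain ⟨u', hu', hd, hss⟩ := aux_step G h d hray u hu hx
        have hlt := Finset.card_lt_card hss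
        have := ih u' hu' (by omega)
        linarith
  intro u hu
  exact main (m + p) u ((auxVal_mem G h u).mp hu) (by omega)
end

section
/- Equivalence of the MILP with its projected (value-function) form: Assume Q := {u ∈ ℝ^m : u ≥ 0 and Gᵀ u ≥ h} is nonempty. Then sSup {cᵀ x + hᵀ y : x ∈ X, y ∈ ℝ^p, y ≥ 0, A x + G y ≤ b} = sSup {cᵀ x + inf {(b - A x)ᵀ u : u ∈ Q} : x ∈ X and there exists y ≥ 0 with G y ≤ b - A x}. -/
open Matrix Finset
open scoped RealInnerProductSpace

section FarkasMachinery

variable {E : Type*} [NormedAddCommGroup E] [InnerProductSpace ℝ E] [FiniteDimensional ℝ E]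

private theorem isClosed_coneSet : ∀ (N : ℕ) (ι : Type) (_ : Fintype ι) (v : ι → E),
    Fintype.card ι = N → IsClosed {x : E | ∃ c : ι → ℝ, 0 ≤ c ∧ x = ∑ i, c i • v i} := by
  intro N
  induction N with
  | zero =>
    intro ι _ v hcard
    have : IsEmpty ι := Fintype.card_eq_zero_iff.mp hcard
    have : {x : E | ∃ c : ι → ℝ, 0 ≤ c ∧ x = ∑ i, c i • v i} = {0} := by
      ext x
      constructor
      · rintro ⟨c, _, rfl⟩; simp
      · rintro rfl; exact ⟨0, le_refl _, by simp⟩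
    rw [this]; exact isClosed_singleton
  | succ n IH =>
    intro ι inst v hcard
    classical
    by_cases hli : LinearIndependent ℝ v
    · let L : (ι → ℝ) →ₗ[ℝ] E :=
        { toFun := fun c => ∑ i, c i • v i
          map_add' := by intro a b; simp [add_smul, Finset.sum_add_distrib]
          map_smul' := by intro r a; simp [smul_smul, Finset.smul_sum] }
      have hker : LinearMap.ker L = ⊥ := by
        rw [LinearMap.ker_eq_bot']
        intro c hc
        have := Fintype.linearIndependent_iff.mp hli c hc
        funext i; exact this i
      have hce := LinearMap.isClosedEmbedding_of_injective hker (f := L)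
      have horth : IsClosed {c : ι → ℝ | 0 ≤ c} := by
        have : {c : ι → ℝ | 0 ≤ c} = ⋂ i : ι, (fun c : ι → ℝ => c i) ⁻¹' Set.Ici 0 := by
          ext c; simp [Pi.le_def, Set.mem_iInter]
        rw [this]
        exact isClosed_iInter fun i => (isClosed_Ici).preimage (continuous_apply i)
      have : {x : E | ∃ c : ι → ℝ, 0 ≤ c ∧ x = ∑ i, c i • v i} = L '' {c | 0 ≤ c} := by
        ext x
        constructor
        · rintro ⟨c, hc, rfl⟩; exact ⟨c, hc, rfl⟩
        · rintro ⟨c, hc, rfl⟩; exact ⟨c, hc, rfl⟩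
      rw [this]
      exact hce.isClosedMap _ horth
    · obtain ⟨g₀, hg₀, i₁, hi₁⟩ := Fintype.not_linearIndependent_iff.mp hli
      have key : ∀ (g : ι → ℝ), (∑ i, g i • v i) = 0 → (∃ i, 0 < g i) →
          {x : E | ∃ c : ι → ℝ, 0 ≤ c ∧ x = ∑ i, c i • v i} ⊆
          ⋃ i₀ : ι, {x : E | ∃ c : {i // i ≠ i₀} → ℝ, 0 ≤ c ∧ x = ∑ j, c j • v j.val} := by
        rintro g hg ⟨iplus, hiplus⟩
        rintro x ⟨c, hc, rfl⟩
        set s : Finset ι := Finset.univ.filter (fun i => 0 < g i) with hs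
        have hsne : s.Nonempty := ⟨iplus, by simp [hs, hiplus]⟩
        obtain ⟨i₀, hi₀s, hmin⟩ := Finset.exists_min_image s (fun i => c i / g i) hsne
        have hgi₀ : 0 < g i₀ := by simpa [hs] using hi₀s
        set t : ℝ := c i₀ / g i₀ with ht
        have ht0 : 0 ≤ t := div_nonneg (hc i₀) hgi₀.le
        set c' : ι → ℝ := fun i => c i - t * g i with hc'
        have hc'0 : 0 ≤ c' := by
          intro i
          have hci : (0:ℝ) ≤ c i := hc i
          show (0:ℝ) ≤ c i - t * g i
          by_cases hgi : 0 < g i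
          · have h1 : t ≤ c i / g i := hmin i (by simp [hs, hgi])
            have h2 : t * g i ≤ c i := (le_div_iff₀ hgi).mp h1
            linarith
          · push_neg at hgi
            have : t * g i ≤ 0 := mul_nonpos_of_nonneg_of_nonpos ht0 hgi
            linarith
        have hc'i₀ : c' i₀ = 0 := by
          show c i₀ - t * g i₀ = 0
          rw [ht, div_mul_cancel₀ _ (ne_of_gt hgi₀)]; ring
        have hsum : ∑ i, c' i • v i = ∑ i, c i • v i := by
          simp only [hc', sub_smul, Finset.sum_sub_distrib]
          rw [show ∑ i, (t * g i) • v i = t • ∑ i, g i • v i by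
            rw [Finset.smul_sum]; congr 1; funext i; rw [smul_smul]]
          rw [hg, smul_zero, sub_zero]
        refine Set.mem_iUnion.mpr ⟨i₀, ⟨fun j => c' j.val, fun j => hc'0 j.val, ?_⟩⟩
        rw [← hsum]
        rw [← Finset.add_sum_erase _ _ (Finset.mem_univ i₀), hc'i₀, zero_smul, zero_add]
        rw [Finset.sum_subtype (p := fun i => i ≠ i₀) (Finset.univ.erase i₀) (by simp)
          (fun i => c' i • v i)]
      have hsubne : ∀ i₀ : ι, Fintype.card {i // i ≠ i₀} = n := by
        intro i₀
        have h2 : Fintype.card {i // ¬ i = i₀} = Fintype.card ι - 1 := by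
          rw [Fintype.card_subtype_compl, Fintype.card_subtype_eq]
        have h3 : Fintype.card {i // i ≠ i₀} = Fintype.card {i // ¬ i = i₀} := rfl
        omega
      have heq : {x : E | ∃ c : ι → ℝ, 0 ≤ c ∧ x = ∑ i, c i • v i} =
          ⋃ i₀ : ι, {x : E | ∃ c : {i // i ≠ i₀} → ℝ, 0 ≤ c ∧ x = ∑ j, c j • v j.val} := by
        apply Set.Subset.antisymm
        · rcases lt_trichotomy (g₀ i₁) 0 with hlt | hz | hgt
          · exact key (-g₀) (by simp [hg₀]) ⟨i₁, by simpa using hlt⟩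
          · exact absurd hz hi₁
          · exact key g₀ hg₀ ⟨i₁, hgt⟩
        · intro x hx
          obtain ⟨i₀, c, hc, rfl⟩ := Set.mem_iUnion.mp hx
          refine ⟨fun i => if h : i = i₀ then 0 else c ⟨i, h⟩, fun i => by dsimp; split <;> [rfl; exact hc _], ?_⟩
          symm
          rw [← Finset.sum_erase (f := fun i : ι => (if h : i = i₀ then (0:ℝ) else c ⟨i, h⟩) • v i)
            (a := i₀) Finset.univ (by simp)]
          rw [Finset.sum_subtype (p := fun i => i ≠ i₀) (Finset.univ.erase i₀) (by simp)]
          exact Finset.sum_congr rfl (fun j _ => by rw [dif_neg j.prop])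
      rw [heq]
      exact isClosed_iUnion_of_finite fun i₀ => IH _ _ _ (hsubne i₀)

section
variable {E : Type*} [NormedAddCommGroup E] [InnerProductSpace ℝ E] [FiniteDimensional ℝ E]

private theorem farkas_abstract {ι : Type} [Fintype ι] (v : ι → E) (q : E) :
    (∃ c : ι → ℝ, 0 ≤ c ∧ q = ∑ i, c i • v i) ↔
      ∀ u : E, (∀ i, 0 ≤ ⟪v i, u⟫) → 0 ≤ ⟪q, u⟫ := by
  classical
  constructor
  · rintro ⟨c, hc, rfl⟩ u hu
    rw [sum_inner]
    apply Finset.sum_nonneg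
    intro i _
    rw [real_inner_smul_left]
    exact mul_nonneg (hc i) (hu i)
  · intro hyp
    by_contra hq
    have hcone : ∀ x ∈ {x : E | ∃ c : ι → ℝ, 0 ≤ c ∧ x = ∑ i, c i • v i},
        ∀ s : ℝ, 0 < s → s • x ∈ {x : E | ∃ c : ι → ℝ, 0 ≤ c ∧ x = ∑ i, c i • v i} := by
      rintro x ⟨c, hc, rfl⟩ s hs
      exact ⟨fun i => s * c i, fun i => mul_nonneg hs.le (hc i), by
        rw [Finset.smul_sum]; exact Finset.sum_congr rfl fun i _ => by dsimp; rw [smul_smul]⟩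
    let K : ConvexCone ℝ E :=
      { carrier := {x : E | ∃ c : ι → ℝ, 0 ≤ c ∧ x = ∑ i, c i • v i}
        smul_mem' := fun s hs x hx => hcone x hx s hs
        add_mem' := by
          rintro x ⟨c, hc, rfl⟩ y ⟨d, hd, rfl⟩
          exact ⟨c + d, fun i => add_nonneg (hc i) (hd i), by
            simp [add_smul, Finset.sum_add_distrib]⟩ }
    have hKne : ((K : Set E)).Nonempty := ⟨0, ⟨0, le_refl _, by simp⟩⟩
    have hKcl : IsClosed (K : Set E) := isClosed_coneSet (Fintype.card ι) ι _ v rfl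
    have hqK : q ∉ K := hq
    obtain ⟨y, hy1, hy2⟩ : ∃ y : E, (∀ x ∈ K, 0 ≤ ⟪x, y⟫) ∧ ⟪y, q⟫ < 0 := by
      obtain ⟨y, hy1, hy2⟩ := ProperCone.hyperplane_separation'
        (C := ⟨K.toPointedCone ⟨0, le_refl _, by simp⟩, hKcl⟩) hqK
      exact ⟨y, hy1, by rwa [real_inner_comm]⟩
    have hvy : ∀ i, 0 ≤ ⟪v i, y⟫ := by
      intro i
      apply hy1
      refine ⟨fun j => if j = i then 1 else 0, fun j => by dsimp; split <;> norm_num, ?_⟩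
      simp [ite_smul]
    have := hyp y hvy
    rw [real_inner_comm] at hy2
    linarith
end

end FarkasMachinery

section FarkasMachinery2

private theorem farkas_pi {k : ℕ} {ι : Type} [Fintype ι] (v : ι → Fin k → ℝ) (q : Fin k → ℝ) :
    (∃ c : ι → ℝ, 0 ≤ c ∧ q = ∑ i, c i • v i) ↔
      ∀ u : Fin k → ℝ, (∀ i, 0 ≤ v i ⬝ᵥ u) → 0 ≤ q ⬝ᵥ u := by
  let e : (Fin k → ℝ) ≃ₗ[ℝ] EuclideanSpace ℝ (Fin k) :=
    (WithLp.linearEquiv 2 ℝ (Fin k → ℝ)).symm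
  have happ : ∀ (a : Fin k → ℝ) (i : Fin k), e a i = a i := fun a i => rfl
  have hinner : ∀ (a b : Fin k → ℝ), ⟪e a, e b⟫ = a ⬝ᵥ b := by
    intro a b
    rw [PiLp.inner_apply]
    simp [RCLike.inner_apply, happ, dotProduct]
    exact Finset.sum_congr rfl fun i _ => mul_comm _ _
  have H := farkas_abstract (fun i => e (v i)) (e q)
  constructor
  · rintro ⟨c, hc, rfl⟩ u hu
    have : e (∑ i, c i • v i) = ∑ i, c i • e (v i) := by
      rw [map_sum]; exact Finset.sum_congr rfl fun i _ => by rw [_root_.map_smul]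
    have h2 := H.mp ⟨c, hc, this⟩ (e u) (fun i => by rw [hinner]; exact hu i)
    rwa [hinner] at h2
  · intro hyp
    obtain ⟨c, hc, hce⟩ := H.mpr (by
      intro u hu
      have := hyp (e.symm u) (fun i => by
        have := hu i
        rwa [show (u : EuclideanSpace ℝ (Fin k)) = e (e.symm u) by simp, hinner] at this)
      rwa [show (u : EuclideanSpace ℝ (Fin k)) = e (e.symm u) by simp, hinner])
    refine ⟨c, hc, ?_⟩
    apply e.injective
    rw [hce, map_sum]
    exact Finset.sum_congr rfl fun i _ => by rw [_root_.map_smul]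

private theorem dot_le_dot_left {ι : Type} [Fintype ι] {a b u : ι → ℝ} (hu : 0 ≤ u) (hab : a ≤ b) :
    a ⬝ᵥ u ≤ b ⬝ᵥ u :=
  Finset.sum_le_sum fun i _ => mul_le_mul_of_nonneg_right (hab i) (hu i)

private theorem dot_le_dot_right {ι : Type} [Fintype ι] {u a b : ι → ℝ} (hu : 0 ≤ u) (hab : a ≤ b) :
    u ⬝ᵥ a ≤ u ⬝ᵥ b :=
  Finset.sum_le_sum fun i _ => mul_le_mul_of_nonneg_left (hab i) (hu i)

private theorem weak_duality {p m : ℕ} {G : Matrix (Fin m) (Fin p) ℝ} {h : Fin p → ℝ}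
    {d : Fin m → ℝ} {y : Fin p → ℝ} {u : Fin m → ℝ}
    (hy : 0 ≤ y) (hGy : G.mulVec y ≤ d) (hu : 0 ≤ u) (hGu : h ≤ Gᵀ.mulVec u) :
    h ⬝ᵥ y ≤ d ⬝ᵥ u := by
  calc h ⬝ᵥ y ≤ (Gᵀ.mulVec u) ⬝ᵥ y := dot_le_dot_left hy hGu
    _ = u ⬝ᵥ (G.mulVec y) := by rw [Matrix.mulVec_transpose, ← Matrix.dotProduct_mulVec]
    _ ≤ u ⬝ᵥ d := dot_le_dot_right hu hGy
    _ = d ⬝ᵥ u := dotProduct_comm _ _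

private theorem lp_strong_duality {p m : ℕ} (G : Matrix (Fin m) (Fin p) ℝ) (h : Fin p → ℝ)
    (d : Fin m → ℝ)
    (hQ : {u : Fin m → ℝ | 0 ≤ u ∧ h ≤ Gᵀ.mulVec u}.Nonempty)
    (hfeas : ∃ y : Fin p → ℝ, 0 ≤ y ∧ G.mulVec y ≤ d) :
    sSup {z : ℝ | ∃ y : Fin p → ℝ, 0 ≤ y ∧ G.mulVec y ≤ d ∧ z = h ⬝ᵥ y} =
      sInf ((fun u => d ⬝ᵥ u) '' {u : Fin m → ℝ | 0 ≤ u ∧ h ≤ Gᵀ.mulVec u}) := by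
  classical
  obtain ⟨u0, hu00, hu0G⟩ := hQ
  obtain ⟨y0, hy00, hy0G⟩ := hfeas
  set T : Set ℝ := {z : ℝ | ∃ y : Fin p → ℝ, 0 ≤ y ∧ G.mulVec y ≤ d ∧ z = h ⬝ᵥ y} with hT
  set D : Set ℝ := (fun u => d ⬝ᵥ u) '' {u : Fin m → ℝ | 0 ≤ u ∧ h ≤ Gᵀ.mulVec u} with hD
  have hTne : (h ⬝ᵥ y0) ∈ T := ⟨y0, hy00, hy0G, rfl⟩
  have hTbdd : BddAbove T := ⟨d ⬝ᵥ u0, by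
    rintro z ⟨y, hy, hGy, rfl⟩; exact weak_duality hy hGy hu00 hu0G⟩
  have hDne : D.Nonempty := ⟨d ⬝ᵥ u0, ⟨u0, ⟨hu00, hu0G⟩, rfl⟩⟩
  have hDbdd : BddBelow D := ⟨h ⬝ᵥ y0, by
    rintro z ⟨u, ⟨hu, hGu⟩, rfl⟩; exact weak_duality hy00 hy0G hu hGu⟩
  have le1 : sSup T ≤ sInf D := by
    apply le_csInf hDne
    rintro z ⟨u, ⟨hu, hGu⟩, rfl⟩
    apply csSup_le ⟨_, hTne⟩
    rintro w ⟨y, hy, hGy, rfl⟩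
    exact weak_duality hy hGy hu hGu
  have le2 : sInf D ≤ sSup T := by
    set t : ℝ := sSup T with htdef
    apply le_of_forall_pos_le_add
    intro ε hε
    set V : (Fin p ⊕ (Fin m ⊕ Unit)) → Fin (m+1) → ℝ :=
      Sum.elim (fun j => Fin.cons (h j) fun i' => G i' j)
        (Sum.elim (fun i' => Fin.cons 0 (Pi.single i' 1)) fun _ => Fin.cons (-1) 0) with hV
    have hnofeas : ¬ ∃ c : (Fin p ⊕ (Fin m ⊕ Unit)) → ℝ, 0 ≤ c ∧
        (Fin.cons (t + ε) d : Fin (m+1) → ℝ) = ∑ i, c i • V i := by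
      rintro ⟨c, hc, hsum⟩
      set y : Fin p → ℝ := fun j => c (Sum.inl j) with hy
      have hcoord := fun i' : Fin (m+1) => congrFun hsum i'
      have hc0 : t + ε = (∑ j, y j * h j) - c (Sum.inr (Sum.inr ())) := by
        have := hcoord 0
        simp [hV, Fintype.sum_sum_type, Finset.sum_apply, Pi.smul_apply, smul_eq_mul,
          Fin.cons_zero, hy] at this
        linarith [this]
      have hcsucc : ∀ i : Fin m, d i = (∑ j, y j * G i j) + c (Sum.inr (Sum.inl i)) := by
        intro i
        have := hcoord i.succ
        simp [hV, Fintype.sum_sum_type, Finset.sum_apply, Pi.smul_apply, smul_eq_mul,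
          Fin.cons_succ, Pi.single_apply, mul_ite, hy] at this
        linarith [this]
      have hyfeas : G.mulVec y ≤ d := by
        intro i
        have hGyi : G.mulVec y i = ∑ j, y j * G i j := by
          simp [Matrix.mulVec, dotProduct, mul_comm]
        have hsi : (0:ℝ) ≤ c (Sum.inr (Sum.inl i)) := hc _
        rw [hGyi, hcsucc i]
        linarith
      have hyT : h ⬝ᵥ y ∈ T := ⟨y, fun j => hc (Sum.inl j), hyfeas, rfl⟩
      have h1 : h ⬝ᵥ y ≤ t := le_csSup hTbdd hyT
      have h2 : h ⬝ᵥ y = ∑ j, y j * h j := by simp [dotProduct, mul_comm]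
      have h3 : (0:ℝ) ≤ c (Sum.inr (Sum.inr ())) := hc _
      rw [h2] at h1
      linarith
    rw [farkas_pi] at hnofeas
    push_neg at hnofeas
    obtain ⟨u', hu'cone, hu'neg⟩ := hnofeas
    set μ : ℝ := u' 0 with hμ
    set u : Fin m → ℝ := fun i => u' i.succ with hu
    have hdot : ∀ (a : ℝ) (f : Fin m → ℝ), (Fin.cons a f : Fin (m+1) → ℝ) ⬝ᵥ u' =
        a * μ + f ⬝ᵥ u := by
      intro a f
      simp [dotProduct, Fin.sum_univ_succ, Fin.cons_zero, Fin.cons_succ, hμ, hu]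
    have hμ0 : μ ≤ 0 := by
      have := hu'cone (Sum.inr (Sum.inr ()))
      simp only [hV, Sum.elim_inr, hdot] at this
      simp at this
      linarith
    have hu0 : 0 ≤ u := by
      intro i
      have := hu'cone (Sum.inr (Sum.inl i))
      simp only [hV, Sum.elim_inr, Sum.elim_inl, hdot] at this
      simpa [dotProduct, Pi.single_apply] using this
    have hGu : ∀ j, 0 ≤ h j * μ + (Gᵀ.mulVec u) j := by
      intro j
      have := hu'cone (Sum.inl j)
      simp only [hV, Sum.elim_inl, hdot] at this
      have heq : (fun i' => G i' j) ⬝ᵥ u = Gᵀ.mulVec u j := by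
        simp [Matrix.mulVec, dotProduct, Matrix.transpose_apply]
      linarith [heq ▸ this]
    have hqneg : (t + ε) * μ + d ⬝ᵥ u < 0 := by
      rw [hdot] at hu'neg; exact hu'neg
    by_cases hμz : μ = 0
    · exfalso
      have hGu' : ∀ j, (0:ℝ) ≤ Gᵀ.mulVec u j := by
        intro j; have := hGu j; rw [hμz] at this; linarith
      have h1 : (0:ℝ) ≤ (Gᵀ.mulVec u) ⬝ᵥ y0 :=
        Finset.sum_nonneg fun j _ => mul_nonneg (hGu' j) (hy00 j)
      have h2 : (Gᵀ.mulVec u) ⬝ᵥ y0 = u ⬝ᵥ (G.mulVec y0) := by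
        rw [Matrix.mulVec_transpose, ← Matrix.dotProduct_mulVec]
      have h3 : u ⬝ᵥ (G.mulVec y0) ≤ u ⬝ᵥ d := dot_le_dot_right hu0 hy0G
      have h4 : u ⬝ᵥ d = d ⬝ᵥ u := dotProduct_comm _ _
      rw [hμz] at hqneg
      linarith
    · have hlampos : (0:ℝ) < -μ := lt_of_le_of_ne (neg_nonneg.mpr hμ0) (by
        intro hcon; exact hμz (by linarith [hcon.symm]))
      set lam : ℝ := -μ with hlam
      set u₁ : Fin m → ℝ := fun i => lam⁻¹ * u i with hu₁
      have hu₁0 : 0 ≤ u₁ := fun i => mul_nonneg (inv_nonneg.mpr hlampos.le) (hu0 i)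
      have hscale : ∀ w : Fin m → ℝ, w ⬝ᵥ u₁ = lam⁻¹ * (w ⬝ᵥ u) := by
        intro w
        simp [hu₁, dotProduct, Finset.mul_sum]; ring_nf
        exact Finset.sum_congr rfl fun i _ => by ring
      have hu₁G : h ≤ Gᵀ.mulVec u₁ := by
        intro j
        have h1 := hGu j
        have h2 : Gᵀ.mulVec u₁ j = lam⁻¹ * Gᵀ.mulVec u j := by
          simp [hu₁, Matrix.mulVec, dotProduct, Finset.mul_sum]
          exact Finset.sum_congr rfl fun i _ => by ring
        have h3 : lam * h j ≤ Gᵀ.mulVec u j := by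
          have : μ = -lam := by rw [hlam]; ring
          rw [this] at h1; linarith
        have h4 : lam⁻¹ * (lam * h j) ≤ lam⁻¹ * Gᵀ.mulVec u j :=
          mul_le_mul_of_nonneg_left h3 (inv_nonneg.mpr hlampos.le)
        rw [inv_mul_cancel_left₀ (ne_of_gt hlampos)] at h4
        rw [h2]; exact h4
      have hd₁ : d ⬝ᵥ u₁ < t + ε := by
        have h1 : d ⬝ᵥ u < lam * (t + ε) := by
          have : μ = -lam := by rw [hlam]; ring
          rw [this] at hqneg; linarith
        have h2 : lam⁻¹ * (d ⬝ᵥ u) < lam⁻¹ * (lam * (t + ε)) :=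
          mul_lt_mul_of_pos_left h1 (inv_pos.mpr hlampos)
        rw [inv_mul_cancel_left₀ (ne_of_gt hlampos)] at h2
        calc d ⬝ᵥ u₁ = lam⁻¹ * (d ⬝ᵥ u) := hscale d
          _ < t + ε := h2
      exact le_trans (csInf_le hDbdd ⟨u₁, ⟨hu₁0, hu₁G⟩, rfl⟩) hd₁.le
  exact le_antisymm le1 le2

end FarkasMachinery2

/-- Equivalence of the MILP with its projected (value-function) form. -/
theorem milp_eq_projected_form (n p m : ℕ)
    (A : Matrix (Fin m) (Fin n) ℝ) (G : Matrix (Fin m) (Fin p) ℝ)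
    (b : Fin m → ℝ) (c : Fin n → ℝ) (h : Fin p → ℝ)
    (X : Set (Fin n → ℝ)) (hX : ∀ x ∈ X, ∀ i, x i = 0 ∨ x i = 1)
    (hQ : {u : Fin m → ℝ | 0 ≤ u ∧ h ≤ Gᵀ.mulVec u}.Nonempty) :
    sSup {z : ℝ | ∃ x ∈ X, ∃ y : Fin p → ℝ, 0 ≤ y ∧ A.mulVec x + G.mulVec y ≤ b ∧
        z = c ⬝ᵥ x + h ⬝ᵥ y} =
    sSup {z : ℝ | ∃ x ∈ X, (∃ y : Fin p → ℝ, 0 ≤ y ∧ G.mulVec y ≤ b - A.mulVec x) ∧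
        z = c ⬝ᵥ x + sInf ((fun u => (b - A.mulVec x) ⬝ᵥ u) ''
          {u : Fin m → ℝ | 0 ≤ u ∧ h ≤ Gᵀ.mulVec u})} := by
  classical
  obtain ⟨u0, hu00, hu0G⟩ := hQ
  set Q : Set (Fin m → ℝ) := {u : Fin m → ℝ | 0 ≤ u ∧ h ≤ Gᵀ.mulVec u} with hQdef
  have hQne : Q.Nonempty := ⟨u0, hu00, hu0G⟩
  set S1 : Set ℝ := {z : ℝ | ∃ x ∈ X, ∃ y : Fin p → ℝ, 0 ≤ y ∧ A.mulVec x + G.mulVec y ≤ b ∧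
      z = c ⬝ᵥ x + h ⬝ᵥ y} with hS1
  set S2 : Set ℝ := {z : ℝ | ∃ x ∈ X, (∃ y : Fin p → ℝ, 0 ≤ y ∧ G.mulVec y ≤ b - A.mulVec x) ∧
      z = c ⬝ᵥ x + sInf ((fun u => (b - A.mulVec x) ⬝ᵥ u) '' Q)} with hS2
  have hGyIff : ∀ (x : Fin n → ℝ) (y : Fin p → ℝ),
      A.mulVec x + G.mulVec y ≤ b ↔ G.mulVec y ≤ b - A.mulVec x := by
    intro x y
    constructor
    · intro hle i; have := hle i; simp only [Pi.add_apply, Pi.sub_apply] at *; linarith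
    · intro hle i; have := hle i; simp only [Pi.add_apply, Pi.sub_apply] at *; linarith
  by_cases hF : ∃ x ∈ X, ∃ y : Fin p → ℝ, 0 ≤ y ∧ G.mulVec y ≤ b - A.mulVec x
  · -- feasible case
    obtain ⟨x₀, hx₀X, y₀, hy₀0, hy₀G⟩ := hF
    -- uniform bound
    set B : ℝ := (∑ i, |c i|) + ∑ i, (|b i| + ∑ j, |A i j|) * u0 i with hB
    have hcx : ∀ x ∈ X, c ⬝ᵥ x ≤ ∑ i, |c i| := by
      intro x hx
      apply Finset.sum_le_sum
      intro i _
      rcases hX x hx i with h0 | h1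
      · rw [h0]; simp [abs_nonneg]
      · rw [h1]; simpa using le_abs_self (c i)
    have hdu0 : ∀ x ∈ X, (b - A.mulVec x) ⬝ᵥ u0 ≤ ∑ i, (|b i| + ∑ j, |A i j|) * u0 i := by
      intro x hx
      apply Finset.sum_le_sum
      intro i _
      apply mul_le_mul_of_nonneg_right _ (hu00 i)
      have hAx : -(∑ j, |A i j|) ≤ A.mulVec x i := by
        have : A.mulVec x i = ∑ j, A i j * x j := rfl
        rw [this, ← Finset.sum_neg_distrib]
        apply Finset.sum_le_sum
        intro j _
        rcases hX x hx j with h0 | h1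
        · rw [h0]; simp [abs_nonneg]
        · rw [h1, mul_one]; exact neg_abs_le (A i j)
      have : (b - A.mulVec x) i = b i - A.mulVec x i := rfl
      rw [this]
      have := le_abs_self (b i)
      linarith
    have hbound : ∀ x ∈ X, c ⬝ᵥ x + (b - A.mulVec x) ⬝ᵥ u0 ≤ B := by
      intro x hx
      have := hcx x hx
      have := hdu0 x hx
      rw [hB]; linarith
    -- bounds on S1 and S2
    have hbd1 : ∀ z ∈ S1, z ≤ B := by
      rintro z ⟨x, hx, y, hy0, hyG, rfl⟩
      have hwd : h ⬝ᵥ y ≤ (b - A.mulVec x) ⬝ᵥ u0 :=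
        weak_duality hy0 ((hGyIff x y).mp hyG) hu00 hu0G
      have := hbound x hx
      linarith
    have hbd2 : ∀ z ∈ S2, z ≤ B := by
      rintro z ⟨x, hx, ⟨y, hy0, hyG⟩, rfl⟩
      have hDb : BddBelow ((fun u => (b - A.mulVec x) ⬝ᵥ u) '' Q) := by
        refine ⟨h ⬝ᵥ y, ?_⟩
        rintro w ⟨u, ⟨hu, hGu⟩, rfl⟩
        exact weak_duality hy0 hyG hu hGu
      have h1 : sInf ((fun u => (b - A.mulVec x) ⬝ᵥ u) '' Q) ≤ (b - A.mulVec x) ⬝ᵥ u0 :=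
        csInf_le hDb ⟨u0, ⟨hu00, hu0G⟩, rfl⟩
      have := hbound x hx
      linarith
    have hS1ne : S1.Nonempty := ⟨c ⬝ᵥ x₀ + h ⬝ᵥ y₀, x₀, hx₀X, y₀, hy₀0, (hGyIff x₀ y₀).mpr hy₀G, rfl⟩
    have hS2ne : S2.Nonempty :=
      ⟨c ⬝ᵥ x₀ + sInf ((fun u => (b - A.mulVec x₀) ⬝ᵥ u) '' Q), x₀, hx₀X, ⟨y₀, hy₀0, hy₀G⟩, rfl⟩
    apply le_antisymm
    · apply csSup_le hS1ne
      rintro z ⟨x, hx, y, hy0, hyG, rfl⟩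
      have hyG' := (hGyIff x y).mp hyG
      have hle : h ⬝ᵥ y ≤ sInf ((fun u => (b - A.mulVec x) ⬝ᵥ u) '' Q) := by
        apply le_csInf
        · exact ⟨(b - A.mulVec x) ⬝ᵥ u0, ⟨u0, ⟨hu00, hu0G⟩, rfl⟩⟩
        · rintro w ⟨u, ⟨hu, hGu⟩, rfl⟩
          exact weak_duality hy0 hyG' hu hGu
      have hmem : c ⬝ᵥ x + sInf ((fun u => (b - A.mulVec x) ⬝ᵥ u) '' Q) ∈ S2 :=
        ⟨x, hx, ⟨y, hy0, hyG'⟩, rfl⟩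
      have := le_csSup ⟨B, fun z hz => hbd2 z hz⟩ hmem
      linarith
    · apply csSup_le hS2ne
      rintro z ⟨x, hx, ⟨y, hy0, hyG⟩, rfl⟩
      have hsd := lp_strong_duality G h (b - A.mulVec x) ⟨u0, hu00, hu0G⟩ ⟨y, hy0, hyG⟩
      rw [← hsd]
      have hTne : (h ⬝ᵥ y) ∈ {z : ℝ | ∃ y' : Fin p → ℝ, 0 ≤ y' ∧
          G.mulVec y' ≤ b - A.mulVec x ∧ z = h ⬝ᵥ y'} := ⟨y, hy0, hyG, rfl⟩
      have hkey : sSup {z : ℝ | ∃ y' : Fin p → ℝ, 0 ≤ y' ∧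
          G.mulVec y' ≤ b - A.mulVec x ∧ z = h ⬝ᵥ y'} ≤ sSup S1 - c ⬝ᵥ x := by
        apply csSup_le ⟨_, hTne⟩
        rintro w ⟨y', hy'0, hy'G, rfl⟩
        have hmem : c ⬝ᵥ x + h ⬝ᵥ y' ∈ S1 := ⟨x, hx, y', hy'0, (hGyIff x y').mpr hy'G, rfl⟩
        have := le_csSup ⟨B, fun z hz => hbd1 z hz⟩ hmem
        linarith
      linarith
  · -- infeasible case: both sets empty
    have h1 : S1 = ∅ := by
      ext z
      simp only [Set.mem_empty_iff_false, iff_false, hS1, Set.mem_setOf_eq]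
      rintro ⟨x, hx, y, hy0, hyG, rfl⟩
      exact hF ⟨x, hx, y, hy0, (hGyIff x y).mp hyG⟩
    have h2 : S2 = ∅ := by
      ext z
      simp only [Set.mem_empty_iff_false, iff_false, hS2, Set.mem_setOf_eq]
      rintro ⟨x, hx, hy, rfl⟩
      exact hF ⟨x, hx, hy⟩
    rw [h1, h2]
end

section
/- Equivalence of the MILP with the full Benders master problem: Assume Q := {u ∈ ℝ^m : u ≥ 0 and Gᵀ u ≥ h} is nonempty. Then sSup {cᵀ x + hᵀ y : x ∈ X, y ∈ ℝ^p, y ≥ 0, A x + G y ≤ b} = sSup {cᵀ x + t : x ∈ X, t ∈ ℝ, (b - A x)ᵀ u ≥ t for every extreme point u of Q, and (b - A x)ᵀ r ≥ 0 for every r ∈ ℝ^m with r ≥ 0 and Gᵀ r ≥ 0}. -/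
open Matrix

lemma cone_carath {ι : Type*} [Fintype ι] {E : Type*} [AddCommGroup E] [Module ℝ E]
    (a : ι → E) (c : ι → ℝ) (hc : 0 ≤ c) :
    ∃ s : Finset ι, LinearIndependent ℝ (fun i : s => a i) ∧
      ∃ c' : ι → ℝ, 0 ≤ c' ∧ (∀ i ∉ s, c' i = 0) ∧ ∑ i, c' i • a i = ∑ i, c i • a i := by
  classical
  generalize hN : (Finset.univ.filter fun i => c i ≠ 0).card = N
  induction N using Nat.strong_induction_on generalizing c with
  | _ N IH =>
  set s₀ : Finset ι := Finset.univ.filter fun i => c i ≠ 0 with hs₀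
  by_cases hLI : LinearIndependent ℝ (fun i : s₀ => a i)
  · exact ⟨s₀, hLI, c, hc, fun i hi => by
      by_contra hne; exact hi (Finset.mem_filter.2 ⟨Finset.mem_univ _, hne⟩), rfl⟩
  · obtain ⟨g, hgsum, i₁, hgi₁⟩ := Fintype.not_linearIndependent_iff.1 hLI
    set g' : ι → ℝ := fun i => if h : i ∈ s₀ then g ⟨i, h⟩ else 0 with hg'
    have hg'sum : ∑ i, g' i • a i = 0 := by
      rw [← Finset.sum_subset (Finset.subset_univ s₀)
        (fun i _ hi => by simp [hg', dif_neg hi])]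
      rw [← Finset.sum_coe_sort s₀ (fun i => g' i • a i)]
      rw [← hgsum]
      exact Finset.sum_congr rfl fun i _ => by simp [hg', dif_pos i.2]
    have hg'supp : ∀ i, g' i ≠ 0 → c i ≠ 0 := by
      intro i hi
      by_contra hci
      exact hi (by simp [hg', hs₀, hci])
    have hex : ∃ g'' : ι → ℝ, (∑ i, g'' i • a i = 0) ∧ (∀ i, g'' i ≠ 0 → c i ≠ 0) ∧
        ∃ i, 0 < g'' i := by
      have hgi₁' : g' (i₁ : ι) ≠ 0 := by
        simpa [hg', dif_pos i₁.2, Subtype.coe_eta] using hgi₁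
      rcases lt_or_gt_of_ne hgi₁' with hlt | hgt
      · refine ⟨-g', ?_, ?_, i₁, by simpa using hlt⟩
        · have : ∑ i, (-g') i • a i = -∑ i, g' i • a i := by
            rw [← Finset.sum_neg_distrib]
            exact Finset.sum_congr rfl fun i _ => by simp [neg_smul]
          rw [this, hg'sum, neg_zero]
        · intro i hi; exact hg'supp i (by simpa [neg_ne_zero] using hi)
      · exact ⟨g', hg'sum, hg'supp, i₁, hgt⟩
    clear hg'sum hg'supp hgi₁ hgsum hg' hLI
    obtain ⟨g'', hg''sum, hg''supp, iw, hiw⟩ := hex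
    set T : Finset ι := Finset.univ.filter fun i => 0 < g'' i with hT
    obtain ⟨i₀, hi₀T, hmin⟩ := T.exists_min_image (fun i => c i / g'' i)
      ⟨iw, Finset.mem_filter.2 ⟨Finset.mem_univ _, hiw⟩⟩
    have hgi₀ : 0 < g'' i₀ := (Finset.mem_filter.1 hi₀T).2
    set θ : ℝ := c i₀ / g'' i₀ with hθ
    have hθ0 : 0 ≤ θ := div_nonneg (hc i₀) hgi₀.le
    set c'' : ι → ℝ := fun i => c i - θ * g'' i with hc''
    have hc''0 : 0 ≤ c'' := by
      intro i
      have hci : (0:ℝ) ≤ c i := hc i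
      show (0:ℝ) ≤ c i - θ * g'' i
      rcases le_or_gt (g'' i) 0 with hgle | hgpos
      · have : 0 ≤ -(θ * g'' i) := by
          rw [neg_nonneg]; exact mul_nonpos_of_nonneg_of_nonpos hθ0 hgle
        linarith
      · have hle : θ ≤ c i / g'' i :=
          hmin i (Finset.mem_filter.2 ⟨Finset.mem_univ _, hgpos⟩)
        have := (le_div_iff₀ hgpos).1 hle
        linarith
    have hc''sum : ∑ i, c'' i • a i = ∑ i, c i • a i := by
      have : ∑ i, c'' i • a i = ∑ i, c i • a i - θ • ∑ i, g'' i • a i := by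
        rw [Finset.smul_sum, ← Finset.sum_sub_distrib]
        exact Finset.sum_congr rfl fun i _ => by
          simp [hc'', sub_smul, smul_smul]
      rw [this, hg''sum, smul_zero, sub_zero]
    have hsub : (Finset.univ.filter fun i => c'' i ≠ 0) ⊂ Finset.univ.filter fun i => c i ≠ 0 := by
      constructor
      · intro i hi
        have hi' := (Finset.mem_filter.1 hi).2
        refine Finset.mem_filter.2 ⟨Finset.mem_univ _, ?_⟩
        intro hci
        rcases eq_or_ne (g'' i) 0 with hg0 | hg0
        · exact hi' (by simp [hc'', hci, hg0])
        · exact hg''supp i hg0 hci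
      · intro hsup
        have hi₀mem : i₀ ∈ Finset.univ.filter fun i => c i ≠ 0 :=
          Finset.mem_filter.2 ⟨Finset.mem_univ _, hg''supp i₀ hgi₀.ne'⟩
        have : c'' i₀ ≠ 0 := (Finset.mem_filter.1 (hsup hi₀mem)).2
        exact this (by simp [hc'', hθ]; field_simp; ring)
    have hcard : (Finset.univ.filter fun i => c'' i ≠ 0).card < N := by
      rw [← hN]; exact Finset.card_lt_card hsub
    obtain ⟨s, hsLI, c₃, hc₃0, hc₃supp, hc₃sum⟩ := IH _ hcard c'' hc''0 rfl
    exact ⟨s, hsLI, c₃, hc₃0, hc₃supp, by rw [hc₃sum, hc''sum]⟩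

lemma isClosed_fg_cone {κ ι : Type*} [Fintype κ] [Fintype ι]
    (a : ι → EuclideanSpace ℝ κ) :
    IsClosed {x : EuclideanSpace ℝ κ | ∃ c : ι → ℝ, 0 ≤ c ∧ ∑ i, c i • a i = x} := by
  classical
  have key : {x : EuclideanSpace ℝ κ | ∃ c : ι → ℝ, 0 ≤ c ∧ ∑ i, c i • a i = x} =
      ⋃ s ∈ {s : Finset ι | LinearIndependent ℝ (fun i : s => a i)},
        {x : EuclideanSpace ℝ κ | ∃ c : s → ℝ, 0 ≤ c ∧ ∑ i, c i • a i = x} := by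
    ext x
    simp only [Set.mem_iUnion, Set.mem_setOf_eq]
    constructor
    · rintro ⟨c, hc, rfl⟩
      obtain ⟨s, hsLI, c', hc'0, hc'supp, hc'sum⟩ := cone_carath a c hc
      refine ⟨s, hsLI, fun i => c' i, fun i => hc'0 i, ?_⟩
      calc ∑ x : s, c' x • a x = ∑ i ∈ s, c' i • a i :=
            Finset.sum_coe_sort s (fun i => c' i • a i)
        _ = ∑ i : ι, c' i • a i := Finset.sum_subset (Finset.subset_univ s)
            (fun i _ hi => by rw [hc'supp i hi, zero_smul])
        _ = ∑ i : ι, c i • a i := hc'sum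
    · rintro ⟨s, _, c, hc, rfl⟩
      refine ⟨fun i => if h : i ∈ s then c ⟨i, h⟩ else 0, fun i => by
        by_cases h : i ∈ s <;> simp [h]; exact hc _, ?_⟩
      rw [← Finset.sum_subset (Finset.subset_univ s) (fun i _ hi => by simp [dif_neg hi])]
      rw [← Finset.sum_coe_sort s]
      exact Finset.sum_congr rfl fun i _ => by simp
  rw [key]
  refine Set.Finite.isClosed_biUnion (Set.toFinite _) ?_
  rintro s hs
  have hinj : LinearMap.ker (∑ i : s, (PiLp.projₗ 2 (fun _ : s => ℝ) i).smulRight (a i) :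
      EuclideanSpace ℝ s →ₗ[ℝ] EuclideanSpace ℝ κ) = ⊥ := by
    rw [LinearMap.ker_eq_bot']
    intro c hc
    have hc' : ∑ i : s, c i • a i = 0 := by
      simpa [LinearMap.sum_apply, LinearMap.smulRight_apply] using hc
    exact PiLp.ext (Fintype.linearIndependent_iff.1 hs c hc')
  have := (LinearMap.isClosedEmbedding_of_injective hinj).isClosedMap
  have himg : {x : EuclideanSpace ℝ κ | ∃ c : s → ℝ, 0 ≤ c ∧ ∑ i, c i • a i = x} =
      (∑ i : s, (PiLp.projₗ 2 (fun _ : s => ℝ) i).smulRight (a i) :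
        EuclideanSpace ℝ s →ₗ[ℝ] EuclideanSpace ℝ κ) '' {c | ∀ i, 0 ≤ c i} := by
    ext x
    simp only [Set.mem_image, Set.mem_setOf_eq, LinearMap.sum_apply,
      LinearMap.smulRight_apply, PiLp.projₗ_apply]
    exact ⟨fun ⟨c, h1, h2⟩ => ⟨WithLp.toLp 2 c, fun i => h1 i, h2⟩, fun ⟨c, h1, h2⟩ => ⟨c.ofLp, fun i => h1 i, h2⟩⟩
  rw [himg]
  apply this
  have : {c : EuclideanSpace ℝ s | ∀ i, 0 ≤ c i} =
      ⋂ i : s, {c : EuclideanSpace ℝ s | 0 ≤ c i} := by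
    ext c; simp
  rw [this]
  exact isClosed_iInter fun i => isClosed_le continuous_const (PiLp.continuous_apply 2 (fun _ : s => ℝ) i)

open scoped InnerProductSpace in
lemma farkas_aux {κ ι : Type*} [Fintype κ] [Fintype ι]
    (a : ι → EuclideanSpace ℝ κ) (q : EuclideanSpace ℝ κ)
    (hq : ¬ ∃ c : ι → ℝ, 0 ≤ c ∧ ∑ i, c i • a i = q) :
    ∃ w : EuclideanSpace ℝ κ, (∀ i, 0 ≤ ⟪a i, w⟫_ℝ) ∧ ⟪q, w⟫_ℝ < 0 := by
  classical
  set K : ConvexCone ℝ (EuclideanSpace ℝ κ) :=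
    { carrier := {x | ∃ c : ι → ℝ, 0 ≤ c ∧ ∑ i, c i • a i = x}
      smul_mem' := by
        rintro t ht x ⟨c, hc, rfl⟩
        exact ⟨fun i => t * c i, fun i => mul_nonneg ht.le (hc i), by
          rw [Finset.smul_sum]; exact Finset.sum_congr rfl fun i _ => (smul_smul t (c i) _).symm⟩
      add_mem' := by
        rintro x ⟨c, hc, rfl⟩ y ⟨c', hc', rfl⟩
        exact ⟨c + c', fun i => add_nonneg (hc i) (hc' i), by
          rw [← Finset.sum_add_distrib]
          exact Finset.sum_congr rfl fun i _ => by simp [add_smul]⟩ } with hK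
  have hne : (K : Set (EuclideanSpace ℝ κ)).Nonempty :=
    ⟨0, ⟨0, le_refl _, by simp⟩⟩
  have hcl : IsClosed (K : Set (EuclideanSpace ℝ κ)) := isClosed_fg_cone a
  have hqK : q ∉ K := fun h => hq h
  obtain ⟨w, hw1, hw2⟩ :=
    (show ∃ w : EuclideanSpace ℝ κ, (∀ x ∈ K, 0 ≤ ⟪x, w⟫_ℝ) ∧ ⟪w, q⟫_ℝ < 0 by
      let C : ProperCone ℝ (EuclideanSpace ℝ κ) :=
        { carrier := (K : Set (EuclideanSpace ℝ κ))
          add_mem' := fun hx hy => K.add_mem hx hy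
          zero_mem' := ⟨0, le_refl _, by simp⟩
          smul_mem' := by
            rintro t x ⟨c, hc, rfl⟩
            exact ⟨fun i => (t : ℝ) * c i, fun i => mul_nonneg t.2 (hc i), by
              rw [Finset.smul_sum]
              exact Finset.sum_congr rfl fun i _ => by simp only []; rw [← smul_smul]; rfl⟩
          isClosed' := hcl }
      obtain ⟨w, hw1, hw2⟩ := C.hyperplane_separation' (x₀ := q) hqK
      exact ⟨w, hw1, by rwa [real_inner_comm]⟩)
  refine ⟨w, fun i => ?_, by rwa [real_inner_comm]⟩
  refine hw1 (a i) ⟨fun j => if j = i then 1 else 0, fun j => by positivity, ?_⟩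
  rw [Finset.sum_eq_single i (fun j _ hj => by simp [if_neg hj]) (by simp)]
  simp

lemma farkas_ineq {p m : ℕ} (G : Matrix (Fin m) (Fin p) ℝ) (d : Fin m → ℝ)
    (hinf : ¬ ∃ y : Fin p → ℝ, 0 ≤ y ∧ G.mulVec y ≤ d) :
    ∃ w : Fin m → ℝ, 0 ≤ w ∧ 0 ≤ Gᵀ.mulVec w ∧ d ⬝ᵥ w < 0 := by
  classical
  set a : Fin p ⊕ Fin m → EuclideanSpace ℝ (Fin m) :=
    Sum.elim (fun j => WithLp.toLp 2 (fun i => G i j))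
      (fun i' => WithLp.toLp 2 (fun i => if i = i' then (1:ℝ) else 0)) with ha
  have hq : ¬ ∃ c : Fin p ⊕ Fin m → ℝ, 0 ≤ c ∧ ∑ i, c i • a i = WithLp.toLp 2 d := by
    rintro ⟨c, hc, hsum⟩
    refine hinf ⟨fun j => c (Sum.inl j), fun j => hc _, fun i => ?_⟩
    have := congrArg (fun v : EuclideanSpace ℝ (Fin m) => v i) hsum
    beta_reduce at this
    have heval : (∑ i', c i' • a i') i = ∑ i', c i' * a i' i := by
      rw [WithLp.ofLp_sum, Finset.sum_apply]
      exact Finset.sum_congr rfl fun i' _ => rfl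
    rw [heval, Fintype.sum_sum_type] at this
    simp only [ha, Sum.elim_inl, Sum.elim_inr, PiLp.toLp_apply] at this
    have h2 : ∑ i', c (Sum.inr i') * (if i = i' then (1:ℝ) else 0) = c (Sum.inr i) := by
      rw [Finset.sum_eq_single i (fun j' _ hj' => by simp [if_neg (Ne.symm hj')]) (by simp)]
      simp
    rw [h2] at this
    have hms : G.mulVec (fun j => c (Sum.inl j)) i = ∑ j, c (Sum.inl j) * G i j := by
      simp [Matrix.mulVec, dotProduct, mul_comm]
    rw [hms]
    have hci : (0:ℝ) ≤ c (Sum.inr i) := hc (Sum.inr i)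
    linarith
  obtain ⟨w, hw1, hw2⟩ := farkas_aux a (WithLp.toLp 2 d) hq
  have hinner : ∀ x y : EuclideanSpace ℝ (Fin m), inner ℝ x y = ∑ i, x i * y i := by
    intro x y
    rw [PiLp.inner_apply]
    exact Finset.sum_congr rfl fun i _ => by simp [RCLike.inner_apply, mul_comm]
  refine ⟨w.ofLp, fun i => ?_, fun j => ?_, ?_⟩
  · have h0 := hw1 (Sum.inr i)
    rw [hinner] at h0
    have heq : ∑ k, a (Sum.inr i) k * w k = w i := by
      rw [Finset.sum_eq_single i (fun k _ hk => by simp [ha, if_neg hk]) (by simp)]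
      simp [ha]
    rw [heq] at h0; exact h0
  · have := hw1 (Sum.inl j)
    rw [hinner] at this
    simpa [ha, Matrix.mulVec, dotProduct, Matrix.transpose_apply] using this
  · rw [hinner] at hw2
    simpa [dotProduct] using hw2

lemma farkas_cut {p m : ℕ} (G : Matrix (Fin m) (Fin p) ℝ) (h : Fin p → ℝ)
    (d : Fin m → ℝ) (t : ℝ)
    (hinf : ¬ ∃ y : Fin p → ℝ, 0 ≤ y ∧ G.mulVec y ≤ d ∧ t ≤ h ⬝ᵥ y) :
    ∃ (u : Fin m → ℝ) (l : ℝ), 0 ≤ u ∧ 0 ≤ l ∧ (∀ j, l * h j ≤ Gᵀ.mulVec u j) ∧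
      d ⬝ᵥ u < l * t := by
  classical
  set κ := Fin m ⊕ Unit
  set a : Fin p ⊕ (Fin m ⊕ Unit) → EuclideanSpace ℝ κ :=
    Sum.elim (fun j => WithLp.toLp 2 (Sum.elim (fun i => G i j) (fun _ => -h j)))
      (Sum.elim (fun i' => WithLp.toLp 2 (Sum.elim (fun i => if i = i' then (1:ℝ) else 0) 0))
        (fun _ => WithLp.toLp 2 (Sum.elim 0 (fun _ => (1:ℝ))))) with ha
  set q : EuclideanSpace ℝ κ := WithLp.toLp 2 (Sum.elim d (fun _ => -t)) with hq'
  have hq : ¬ ∃ c : Fin p ⊕ (Fin m ⊕ Unit) → ℝ, 0 ≤ c ∧ ∑ i, c i • a i = q := by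
    rintro ⟨c, hc, hsum⟩
    set y : Fin p → ℝ := fun j => c (Sum.inl j) with hy
    refine hinf ⟨y, fun j => hc _, fun i => ?_, ?_⟩
    · have := congrArg (fun v : EuclideanSpace ℝ κ => v (Sum.inl i)) hsum
      beta_reduce at this
      have heval : (∑ i', c i' • a i') (Sum.inl i) = ∑ i', c i' * a i' (Sum.inl i) := by
        rw [WithLp.ofLp_sum, Finset.sum_apply]; exact Finset.sum_congr rfl fun i' _ => rfl
      rw [heval, Fintype.sum_sum_type, Fintype.sum_sum_type] at this
      simp only [ha, Sum.elim_inl, Sum.elim_inr, PiLp.toLp_apply] at this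
      have h2 : ∑ i', c (Sum.inr (Sum.inl i')) * (if i = i' then (1:ℝ) else 0)
          = c (Sum.inr (Sum.inl i)) := by
        rw [Finset.sum_eq_single i (fun j' _ hj' => by simp [if_neg (Ne.symm hj')]) (by simp)]
        simp
      simp only [Pi.zero_apply, mul_zero, Finset.sum_const_zero] at this
      rw [h2] at this
      have hms : G.mulVec y i = ∑ j, c (Sum.inl j) * G i j := by
        simp [Matrix.mulVec, dotProduct, hy, mul_comm]
      rw [hms]
      have hci : (0:ℝ) ≤ c (Sum.inr (Sum.inl i)) := hc _
      have hqi : q (Sum.inl i) = d i := rfl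
      rw [hqi] at this
      linarith
    · have := congrArg (fun v : EuclideanSpace ℝ κ => v (Sum.inr ())) hsum
      beta_reduce at this
      have heval : (∑ i', c i' • a i') (Sum.inr ()) = ∑ i', c i' * a i' (Sum.inr ()) := by
        rw [WithLp.ofLp_sum, Finset.sum_apply]; exact Finset.sum_congr rfl fun i' _ => rfl
      rw [heval, Fintype.sum_sum_type, Fintype.sum_sum_type] at this
      simp only [ha, Sum.elim_inl, Sum.elim_inr, PiLp.toLp_apply, Pi.zero_apply, mul_zero,
        Finset.sum_const_zero, Finset.univ_unique, Finset.sum_singleton, mul_one] at this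
      have hqi : q (Sum.inr ()) = -t := rfl
      rw [hqi] at this
      have hd : h ⬝ᵥ y = ∑ j, c (Sum.inl j) * h j := by
        simp [dotProduct, hy, mul_comm]
      have hci : (0:ℝ) ≤ c (Sum.inr (Sum.inr ())) := hc _
      have hsum' : ∑ j, c (Sum.inl j) * -(h j) = -∑ j, c (Sum.inl j) * h j := by
        rw [← Finset.sum_neg_distrib]; exact Finset.sum_congr rfl fun j _ => by ring
      rw [hsum'] at this
      rw [hd]
      linarith
  obtain ⟨w, hw1, hw2⟩ := farkas_aux a q hq
  have hinner : ∀ x y : EuclideanSpace ℝ κ, inner ℝ x y = ∑ i, x i * y i := by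
    intro x y
    rw [PiLp.inner_apply]
    exact Finset.sum_congr rfl fun i _ => by simp [RCLike.inner_apply, mul_comm]
  set u : Fin m → ℝ := fun i => w (Sum.inl i) with hu
  set l : ℝ := w (Sum.inr ()) with hl
  have hsumSum : ∀ f : κ → ℝ, ∑ k, f k = ∑ i, f (Sum.inl i) + f (Sum.inr ()) := by
    intro f
    rw [Fintype.sum_sum_type]
    simp
  refine ⟨u, l, fun i => ?_, ?_, fun j => ?_, ?_⟩
  · have h0 := hw1 (Sum.inr (Sum.inl i))
    rw [hinner, hsumSum] at h0
    have heq : ∑ k, a (Sum.inr (Sum.inl i)) (Sum.inl k) * w (Sum.inl k) = u i := by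
      rw [Finset.sum_eq_single i (fun k _ hk => by simp [ha, if_neg hk]) (by simp)]
      simp [ha, hu]
    simp only [ha, Sum.elim_inl, Sum.elim_inr, Pi.zero_apply, zero_mul, add_zero] at h0 heq
    rw [heq] at h0; exact h0
  · have h0 := hw1 (Sum.inr (Sum.inr ()))
    rw [hinner, hsumSum] at h0
    simpa [ha, hl] using h0
  · have h0 := hw1 (Sum.inl j)
    rw [hinner, hsumSum] at h0
    simp only [ha, Sum.elim_inl, Sum.elim_inr] at h0
    have : Gᵀ.mulVec u j = ∑ i, G i j * w (Sum.inl i) := by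
      simp [Matrix.mulVec, dotProduct, Matrix.transpose_apply, hu, mul_comm]
    rw [this]
    have hl' : -h j * w (Sum.inr ()) = -(w (Sum.inr ()) * h j) := by ring
    rw [hl'] at h0
    rw [hl]
    linarith
  · rw [hinner, hsumSum] at hw2
    have : d ⬝ᵥ u = ∑ i, q (Sum.inl i) * w (Sum.inl i) := by
      simp [dotProduct, hq', hu]
    rw [this]
    have hqt : q (Sum.inr ()) * w (Sum.inr ()) = -t * l := rfl
    rw [hqt] at hw2
    linarith

lemma exists_extremePoint_le {p m : ℕ} (G : Matrix (Fin m) (Fin p) ℝ) (h : Fin p → ℝ)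
    (d : Fin m → ℝ) (hd : ∀ r : Fin m → ℝ, 0 ≤ r → 0 ≤ Gᵀ.mulVec r → 0 ≤ d ⬝ᵥ r)
    (u : Fin m → ℝ) (hu0 : 0 ≤ u) (hu1 : h ≤ Gᵀ.mulVec u) :
    ∃ v ∈ Set.extremePoints ℝ {u : Fin m → ℝ | 0 ≤ u ∧ h ≤ Gᵀ.mulVec u},
      d ⬝ᵥ v ≤ d ⬝ᵥ u := by
  classical
  set Q : Set (Fin m → ℝ) := {u : Fin m → ℝ | 0 ≤ u ∧ h ≤ Gᵀ.mulVec u} with hQdef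
  let K : (Fin m → ℝ) → Submodule ℝ (Fin m → ℝ) := fun u =>
    { carrier := {v | (∀ i, u i = 0 → v i = 0) ∧
        ∀ j, Gᵀ.mulVec u j = h j → Gᵀ.mulVec v j = 0}
      add_mem' := by
        rintro x y ⟨hx1, hx2⟩ ⟨hy1, hy2⟩
        refine ⟨fun i hi => ?_, fun j hj => ?_⟩
        · simp [hx1 i hi, hy1 i hi]
        · rw [Matrix.mulVec_add]
          simp [Pi.add_apply, hx2 j hj, hy2 j hj]
      zero_mem' := by
        refine ⟨fun i _ => rfl, fun j _ => ?_⟩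
        rw [Matrix.mulVec_zero]; rfl
      smul_mem' := by
        rintro t x ⟨hx1, hx2⟩
        refine ⟨fun i hi => by simp [hx1 i hi], fun j hj => ?_⟩
        rw [Matrix.mulVec_smul]
        simp [hx2 j hj] }
  generalize hN : Module.finrank ℝ (K u) = N
  induction N using Nat.strong_induction_on generalizing u with
  | _ N IH =>
  by_cases hbot : K u = ⊥
  · -- u is an extreme point
    refine ⟨u, ⟨⟨hu0, hu1⟩, ?_⟩, le_refl _⟩
    rintro x₁ ⟨hx₁0, hx₁1⟩ x₂ ⟨hx₂0, hx₂1⟩ ⟨α, β, hα, hβ, hαβ, hcomb⟩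
    have hmem : x₁ - x₂ ∈ K u := by
      refine ⟨fun i hi => ?_, fun j hj => ?_⟩
      · have hci := congrFun hcomb i
        simp only [Pi.add_apply, Pi.smul_apply, smul_eq_mul] at hci
        rw [hi] at hci
        have h1 : (0:ℝ) ≤ x₁ i := hx₁0 i
        have h2 : (0:ℝ) ≤ x₂ i := hx₂0 i
        have hb1 : 0 ≤ α * x₁ i := mul_nonneg hα.le h1
        have hb2 : 0 ≤ β * x₂ i := mul_nonneg hβ.le h2
        have ha1 : α * x₁ i = 0 := by linarith
        have ha2 : β * x₂ i = 0 := by linarith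
        have hx1 : x₁ i = 0 := (mul_eq_zero.1 ha1).resolve_left hα.ne'
        have hx2 : x₂ i = 0 := (mul_eq_zero.1 ha2).resolve_left hβ.ne'
        simp [Pi.sub_apply, hx1, hx2]
      · have hcj : Gᵀ.mulVec (α • x₁ + β • x₂) j = Gᵀ.mulVec u j := by rw [hcomb]
        rw [Matrix.mulVec_add, Matrix.mulVec_smul, Matrix.mulVec_smul, hj] at hcj
        simp only [Pi.add_apply, Pi.smul_apply, smul_eq_mul] at hcj
        have h1 : h j ≤ Gᵀ.mulVec x₁ j := hx₁1 j
        have h2 : h j ≤ Gᵀ.mulVec x₂ j := hx₂1 j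
        have h3 : α * h j + β * h j = h j := by rw [← add_mul, hαβ, one_mul]
        have hb1 := mul_le_mul_of_nonneg_left h1 hα.le
        have hb2 := mul_le_mul_of_nonneg_left h2 hβ.le
        have e1 : Gᵀ.mulVec x₁ j = h j := mul_left_cancel₀ hα.ne' (by linarith)
        have e2 : Gᵀ.mulVec x₂ j = h j := mul_left_cancel₀ hβ.ne' (by linarith)
        rw [Matrix.mulVec_sub]
        simp [Pi.sub_apply, e1, e2]
    rw [hbot, Submodule.mem_bot, sub_eq_zero] at hmem
    subst hmem
    have hx1u : x₁ = u := by
      rw [← hcomb, ← add_smul, hαβ, one_smul]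
    exact hx1u
  · -- find a direction and move to the boundary
    obtain ⟨v, hvK, hvne⟩ := Submodule.exists_mem_ne_zero_of_ne_bot hbot
    have notcone : ∀ x : Fin m → ℝ, ¬(0 ≤ x ∧ 0 ≤ Gᵀ.mulVec x) →
        (∃ i, x i < 0) ∨ (∃ j, Gᵀ.mulVec x j < 0) := by
      intro x hx
      rcases not_and_or.1 hx with h' | h'
      · left
        rw [Pi.le_def] at h'
        obtain ⟨i, hi⟩ := not_forall.1 h'
        exact ⟨i, not_le.1 hi⟩
      · right
        rw [Pi.le_def] at h'
        obtain ⟨j, hj⟩ := not_forall.1 h'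
        exact ⟨j, not_le.1 hj⟩
    obtain ⟨w, hwK, hwdec, hwd⟩ : ∃ w, w ∈ K u ∧
        ((∃ i, w i < 0) ∨ (∃ j, Gᵀ.mulVec w j < 0)) ∧ d ⬝ᵥ w ≤ 0 := by
      by_cases hv1 : 0 ≤ v ∧ 0 ≤ Gᵀ.mulVec v
      · refine ⟨-v, neg_mem hvK, Or.inl ?_, ?_⟩
        · obtain ⟨i, hi⟩ := Function.ne_iff.1 hvne
          have hvi : (0:ℝ) < v i := lt_of_le_of_ne (hv1.1 i) (Ne.symm hi)
          exact ⟨i, by simpa using hvi⟩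
        · have := hd v hv1.1 hv1.2
          rw [dotProduct_neg]; linarith
      · by_cases hv2 : 0 ≤ (-v) ∧ 0 ≤ Gᵀ.mulVec (-v)
        · refine ⟨v, hvK, Or.inl ?_, ?_⟩
          · obtain ⟨i, hi⟩ := Function.ne_iff.1 hvne
            have hvi : (0:ℝ) ≤ -v i := hv2.1 i
            exact ⟨i, lt_of_le_of_ne (by linarith) hi⟩
          · have := hd (-v) hv2.1 hv2.2
            rw [dotProduct_neg] at this; linarith
        · rcases le_or_gt (d ⬝ᵥ v) 0 with hdv | hdv
          · exact ⟨v, hvK, notcone v hv1, hdv⟩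
          · refine ⟨-v, neg_mem hvK, ?_, by rw [dotProduct_neg]; linarith⟩
            rcases notcone (-v) hv2 with ⟨i, hi⟩ | ⟨j, hj⟩
            · exact Or.inl ⟨i, hi⟩
            · exact Or.inr ⟨j, hj⟩
    obtain ⟨hwK1, hwK2⟩ := hwK
    set F : Finset ℝ :=
      ((Finset.univ.filter fun i => w i < 0).image fun i => u i / (-w i)) ∪
      ((Finset.univ.filter fun j => Gᵀ.mulVec w j < 0).image fun j =>
        (Gᵀ.mulVec u j - h j) / (-(Gᵀ.mulVec w j))) with hF
    have hFne : F.Nonempty := by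
      rcases hwdec with ⟨i, hi⟩ | ⟨j, hj⟩
      · exact ⟨u i / (-w i), Finset.mem_union_left _ (Finset.mem_image.2
          ⟨i, Finset.mem_filter.2 ⟨Finset.mem_univ _, hi⟩, rfl⟩)⟩
      · exact ⟨_, Finset.mem_union_right _ (Finset.mem_image.2
          ⟨j, Finset.mem_filter.2 ⟨Finset.mem_univ _, hj⟩, rfl⟩)⟩
    set s := F.min' hFne with hs
    have hFnonneg : ∀ x ∈ F, 0 ≤ x := by
      intro x hx
      rcases Finset.mem_union.1 hx with hx | hx <;> obtain ⟨i, hi, rfl⟩ := Finset.mem_image.1 hx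
      · exact div_nonneg (hu0 i) (by linarith [(Finset.mem_filter.1 hi).2])
      · exact div_nonneg (by linarith [hu1 i]) (by linarith [(Finset.mem_filter.1 hi).2])
    have hs0 : 0 ≤ s := hFnonneg _ (F.min'_mem hFne)
    set u' : Fin m → ℝ := u + s • w with hu'
    have hu'eval : ∀ i, u' i = u i + s * w i := fun i => rfl
    have hGu' : ∀ j, Gᵀ.mulVec u' j = Gᵀ.mulVec u j + s * Gᵀ.mulVec w j := by
      intro j
      rw [hu', Matrix.mulVec_add, Matrix.mulVec_smul]
      rfl
    have hu'0 : 0 ≤ u' := by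
      intro i
      show (0:ℝ) ≤ u i + s * w i
      rcases le_or_gt 0 (w i) with hwi | hwi
      · have h1 : 0 ≤ s * w i := mul_nonneg hs0 hwi
        have h2 : (0:ℝ) ≤ u i := hu0 i
        linarith
      · have hle : s ≤ u i / (-w i) := F.min'_le _ (Finset.mem_union_left _
          (Finset.mem_image.2 ⟨i, Finset.mem_filter.2 ⟨Finset.mem_univ _, hwi⟩, rfl⟩))
        rw [le_div_iff₀ (by linarith)] at hle
        nlinarith
    have hu'1 : h ≤ Gᵀ.mulVec u' := by
      intro j
      rw [hGu' j]
      rcases le_or_gt 0 (Gᵀ.mulVec w j) with hwj | hwj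
      · have h1 : 0 ≤ s * Gᵀ.mulVec w j := mul_nonneg hs0 hwj
        have h2 := hu1 j
        linarith
      · have hle : s ≤ (Gᵀ.mulVec u j - h j) / (-(Gᵀ.mulVec w j)) :=
          F.min'_le _ (Finset.mem_union_right _
            (Finset.mem_image.2 ⟨j, Finset.mem_filter.2 ⟨Finset.mem_univ _, hwj⟩, rfl⟩))
        rw [le_div_iff₀ (by linarith)] at hle
        nlinarith
    have htight1 : ∀ i, u i = 0 → u' i = 0 := by
      intro i hi
      rw [hu'eval i, hi, hwK1 i hi]; ring
    have htight2 : ∀ j, Gᵀ.mulVec u j = h j → Gᵀ.mulVec u' j = h j := by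
      intro j hj
      rw [hGu' j, hj, hwK2 j hj]; ring
    have hKle : K u' ≤ K u := by
      rintro x ⟨hx1, hx2⟩
      exact ⟨fun i hi => hx1 i (htight1 i hi), fun j hj => hx2 j (htight2 j hj)⟩
    have hwnot : w ∉ K u' := by
      have hsF := F.min'_mem hFne
      rw [← hs] at hsF
      rcases Finset.mem_union.1 hsF with hx | hx <;>
        obtain ⟨i, hi, hieq⟩ := Finset.mem_image.1 hx
      · have hwi : w i < 0 := (Finset.mem_filter.1 hi).2
        have hwine : w i ≠ 0 := ne_of_lt hwi
        have hu'i : u' i = 0 := by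
          rw [hu'eval i, ← hieq]
          have h3 := div_mul_cancel₀ (u i) (neg_ne_zero.2 hwine)
          rw [mul_neg] at h3
          linarith
        rintro ⟨hK1, _⟩
        exact hwine (hK1 i hu'i)
      · have hwj : Gᵀ.mulVec w i < 0 := (Finset.mem_filter.1 hi).2
        have hwjne : Gᵀ.mulVec w i ≠ 0 := ne_of_lt hwj
        have hu'j : Gᵀ.mulVec u' i = h i := by
          rw [hGu' i, ← hieq]
          have h3 := div_mul_cancel₀ (Gᵀ.mulVec u i - h i) (neg_ne_zero.2 hwjne)
          rw [mul_neg] at h3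
          linarith
        rintro ⟨_, hK2⟩
        exact hwjne (hK2 i hu'j)
    have hKlt : K u' < K u := lt_of_le_of_ne hKle (fun he => hwnot (by rw [he]; exact ⟨hwK1, hwK2⟩))
    have hrank : Module.finrank ℝ (K u') < N := by
      rw [← hN]
      exact Submodule.finrank_lt_finrank_of_lt hKlt
    obtain ⟨vex, hvex, hvexle⟩ := IH _ hrank u' hu'0 hu'1 rfl
    refine ⟨vex, hvex, le_trans hvexle ?_⟩
    have hdu' : d ⬝ᵥ u' = d ⬝ᵥ u + s * (d ⬝ᵥ w) := by
      rw [hu', dotProduct_add, dotProduct_smul, smul_eq_mul]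
    rw [hdu']
    nlinarith

lemma key_ineq {p m : ℕ} (G : Matrix (Fin m) (Fin p) ℝ) (k : Fin p → ℝ) (d : Fin m → ℝ)
    (u : Fin m → ℝ) (y : Fin p → ℝ) (hu : 0 ≤ u) (hGu : ∀ j, k j ≤ Gᵀ.mulVec u j)
    (hy : 0 ≤ y) (hGy : G.mulVec y ≤ d) : k ⬝ᵥ y ≤ d ⬝ᵥ u := by
  have step1 : k ⬝ᵥ y ≤ (Gᵀ.mulVec u) ⬝ᵥ y := by
    apply Finset.sum_le_sum
    intro j _
    exact mul_le_mul_of_nonneg_right (hGu j) (hy j)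
  have step2 : (Gᵀ.mulVec u) ⬝ᵥ y = u ⬝ᵥ (G.mulVec y) := by
    rw [Matrix.mulVec_transpose, dotProduct_mulVec]
  have step3 : u ⬝ᵥ (G.mulVec y) ≤ u ⬝ᵥ d := by
    apply Finset.sum_le_sum
    intro i _
    exact mul_le_mul_of_nonneg_left (hGy i) (hu i)
  rw [step2] at step1
  rw [dotProduct_comm d u]
  linarith


/-- Equivalence of the MILP with the full Benders master problem. -/
theorem milp_eq_benders_master (n p m : ℕ)
    (A : Matrix (Fin m) (Fin n) ℝ) (G : Matrix (Fin m) (Fin p) ℝ)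
    (b : Fin m → ℝ) (c : Fin n → ℝ) (h : Fin p → ℝ)
    (X : Set (Fin n → ℝ)) (hX : ∀ x ∈ X, ∀ i, x i = 0 ∨ x i = 1)
    (hQ : {u : Fin m → ℝ | 0 ≤ u ∧ h ≤ Gᵀ.mulVec u}.Nonempty) :
    sSup {z : ℝ | ∃ x ∈ X, ∃ y : Fin p → ℝ, 0 ≤ y ∧ A.mulVec x + G.mulVec y ≤ b ∧
        z = c ⬝ᵥ x + h ⬝ᵥ y} =
    sSup {z : ℝ | ∃ x ∈ X, ∃ t : ℝ,
        (∀ u ∈ Set.extremePoints ℝ {u : Fin m → ℝ | 0 ≤ u ∧ h ≤ Gᵀ.mulVec u},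
          t ≤ (b - A.mulVec x) ⬝ᵥ u) ∧
        (∀ r : Fin m → ℝ, 0 ≤ r → 0 ≤ Gᵀ.mulVec r → 0 ≤ (b - A.mulVec x) ⬝ᵥ r) ∧
        z = c ⬝ᵥ x + t} := by
  classical
  obtain ⟨u₀, hu₀⟩ := hQ
  obtain ⟨ustar, hustar, -⟩ := exists_extremePoint_le G h 0
    (by intro r _ _; simp) u₀ hu₀.1 hu₀.2
  have hustarQ : 0 ≤ ustar ∧ h ≤ Gᵀ.mulVec ustar := hustar.1
  set S1 : Set ℝ := {z : ℝ | ∃ x ∈ X, ∃ y : Fin p → ℝ, 0 ≤ y ∧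
      A.mulVec x + G.mulVec y ≤ b ∧ z = c ⬝ᵥ x + h ⬝ᵥ y} with hS1def
  set S2 : Set ℝ := {z : ℝ | ∃ x ∈ X, ∃ t : ℝ,
      (∀ u ∈ Set.extremePoints ℝ {u : Fin m → ℝ | 0 ≤ u ∧ h ≤ Gᵀ.mulVec u},
        t ≤ (b - A.mulVec x) ⬝ᵥ u) ∧
      (∀ r : Fin m → ℝ, 0 ≤ r → 0 ≤ Gᵀ.mulVec r → 0 ≤ (b - A.mulVec x) ⬝ᵥ r) ∧
      z = c ⬝ᵥ x + t} with hS2def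
  -- uniform upper bound
  set B : ℝ := (∑ i, |c i|) + ((∑ j, |b j * ustar j|) + ∑ j, ∑ i, |A j i * ustar j|) with hB
  have hbound : ∀ x, x ∈ X → c ⬝ᵥ x + (b - A.mulVec x) ⬝ᵥ ustar ≤ B := by
    intro x hx
    have h1 : c ⬝ᵥ x ≤ ∑ i, |c i| := by
      apply Finset.sum_le_sum
      intro i _
      rcases hX x hx i with h0 | h0 <;> rw [h0]
      · simp
      · simpa using le_abs_self (c i)
    have h2 : (b - A.mulVec x) ⬝ᵥ ustar ≤
        (∑ j, |b j * ustar j|) + ∑ j, ∑ i, |A j i * ustar j| := by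
      have expand : (b - A.mulVec x) ⬝ᵥ ustar =
          ∑ j, (b j * ustar j + ∑ i, (-(A j i * ustar j)) * x i) := by
        unfold dotProduct
        apply Finset.sum_congr rfl
        intro j _
        simp only [Pi.sub_apply]
        rw [sub_mul, Matrix.mulVec, dotProduct, Finset.sum_mul,
          sub_eq_add_neg, ← Finset.sum_neg_distrib]
        congr 1
        apply Finset.sum_congr rfl
        intro i _
        ring
      rw [expand, ← Finset.sum_add_distrib]
      apply Finset.sum_le_sum
      intro j _
      have hb1 : b j * ustar j ≤ |b j * ustar j| := le_abs_self _
      have hb2 : ∑ i, (-(A j i * ustar j)) * x i ≤ ∑ i, |A j i * ustar j| := by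
        apply Finset.sum_le_sum
        intro i _
        rcases hX x hx i with h0 | h0 <;> rw [h0]
        · simp; positivity
        · rw [mul_one]
          calc -(A j i * ustar j) ≤ |(-(A j i * ustar j))| := le_abs_self _
            _ = |A j i * ustar j| := abs_neg _
      linarith
    linarith
  have hsub : S1 ⊆ S2 := by
    rintro z ⟨x, hx, y, hy0, hcon, rfl⟩
    have hGy : G.mulVec y ≤ b - A.mulVec x := by
      intro j
      have := hcon j
      simp only [Pi.add_apply] at this
      simp only [Pi.sub_apply]
      linarith
    refine ⟨x, hx, h ⬝ᵥ y, ?_, ?_, rfl⟩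
    · intro u hu
      exact key_ineq G h _ u y hu.1.1 (fun j => hu.1.2 j) hy0 hGy
    · intro r hr0 hrG
      have := key_ineq G 0 (b - A.mulVec x) r y hr0 (fun j => by simpa using hrG j) hy0 hGy
      simpa using this
  have hbdd2 : BddAbove S2 := by
    refine ⟨B, ?_⟩
    rintro z ⟨x, hx, t, ht, _, rfl⟩
    have := ht ustar hustar
    have := hbound x hx
    linarith
  have hbdd1 : BddAbove S1 := hbdd2.mono hsub
  have hfeas_of : ∀ x, (∀ r : Fin m → ℝ, 0 ≤ r → 0 ≤ Gᵀ.mulVec r →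
      0 ≤ (b - A.mulVec x) ⬝ᵥ r) → ∃ y : Fin p → ℝ, 0 ≤ y ∧ G.mulVec y ≤ b - A.mulVec x := by
    intro x hrec
    by_contra hinf
    obtain ⟨w, hw0, hwG, hwlt⟩ := farkas_ineq G (b - A.mulVec x) hinf
    exact absurd (hrec w hw0 hwG) (not_le.2 hwlt)
  rcases S2.eq_empty_or_nonempty with hS2e | hS2ne
  · have hS1e : S1 = ∅ := Set.eq_empty_of_subset_empty (hS2e ▸ hsub)
    rw [hS1e, hS2e]
  · have hS1ne : S1.Nonempty := by
      obtain ⟨z, x, hx, t, ht, hrec, rfl⟩ := hS2ne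
      obtain ⟨y, hy0, hGy⟩ := hfeas_of x hrec
      refine ⟨c ⬝ᵥ x + h ⬝ᵥ y, x, hx, y, hy0, ?_, rfl⟩
      intro j
      have := hGy j
      simp only [Pi.sub_apply] at this
      simp only [Pi.add_apply]
      linarith
    apply le_antisymm
    · exact csSup_le_csSup hbdd2 hS1ne hsub
    · refine csSup_le hS2ne ?_
      rintro z ⟨x, hx, t, ht, hrec, rfl⟩
      by_cases hfeas : ∃ y : Fin p → ℝ, 0 ≤ y ∧ G.mulVec y ≤ b - A.mulVec x ∧ t ≤ h ⬝ᵥ y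
      · obtain ⟨y, hy0, hGy, hty⟩ := hfeas
        have hmem : c ⬝ᵥ x + h ⬝ᵥ y ∈ S1 := by
          refine ⟨x, hx, y, hy0, ?_, rfl⟩
          intro j
          have := hGy j
          simp only [Pi.sub_apply] at this
          simp only [Pi.add_apply]
          linarith
        calc c ⬝ᵥ x + t ≤ c ⬝ᵥ x + h ⬝ᵥ y := by linarith
          _ ≤ sSup S1 := le_csSup hbdd1 hmem
      · exfalso
        obtain ⟨u, l, hu0, hl0, hGl, hlt⟩ := farkas_cut G h (b - A.mulVec x) t hfeas
        rcases eq_or_lt_of_le hl0 with hl | hl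
        · have hGu : 0 ≤ Gᵀ.mulVec u := by
            intro j
            have := hGl j
            rw [← hl] at this
            simpa using this
          have := hrec u hu0 hGu
          rw [← hl, zero_mul] at hlt
          linarith
        · set u' : Fin m → ℝ := l⁻¹ • u with hu'
          have hu'0 : 0 ≤ u' := by
            intro i
            exact mul_nonneg (inv_nonneg.2 hl.le) (hu0 i)
          have hu'Q : h ≤ Gᵀ.mulVec u' := by
            intro j
            rw [hu', Matrix.mulVec_smul]
            have := hGl j
            have h2 : l⁻¹ * (l * h j) ≤ l⁻¹ * Gᵀ.mulVec u j :=
              mul_le_mul_of_nonneg_left this (inv_nonneg.2 hl.le)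
            rw [← mul_assoc, inv_mul_cancel₀ hl.ne', one_mul] at h2
            simpa using h2
          have hd' : (b - A.mulVec x) ⬝ᵥ u' < t := by
            have hdot : (b - A.mulVec x) ⬝ᵥ u' = l⁻¹ * ((b - A.mulVec x) ⬝ᵥ u) := by
              rw [hu', dotProduct_smul, smul_eq_mul]
            rw [hdot]
            have h2 : l⁻¹ * ((b - A.mulVec x) ⬝ᵥ u) < l⁻¹ * (l * t) :=
              mul_lt_mul_of_pos_left hlt (inv_pos.2 hl)
            rw [← mul_assoc, inv_mul_cancel₀ hl.ne', one_mul] at h2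
            exact h2
          obtain ⟨vex, hvex, hvle⟩ :=
            exists_extremePoint_le G h (b - A.mulVec x) hrec u' hu'0 hu'Q
          have := ht vex hvex
          linarith
end

section
/- The subproblem value gives a lower bound on the MILP optimum: Assume Q := {u ∈ ℝ^m : u ≥ 0 and Gᵀ u ≥ h} is nonempty. Let x̄ ∈ X and suppose there exists ȳ ∈ ℝ^p with ȳ ≥ 0 and G ȳ ≤ b - A x̄. Then cᵀ x̄ + inf {(b - A x̄)ᵀ u : u ∈ Q} ≤ sSup {cᵀ x + hᵀ y : x ∈ X, y ≥ 0, A x + G y ≤ b}. -/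
open Matrix

section FarkasDev

variable {ι : Type*} [Fintype ι] {H : Type*} [NormedAddCommGroup H]
  [InnerProductSpace ℝ H] [FiniteDimensional ℝ H]

/-- Conic Carathéodory: any nonnegative combination can be rewritten with linearly
independent support. -/
lemma conic_caratheodory (v : ι → H) (c : ι → ℝ) (hc : ∀ i, 0 ≤ c i) :
    ∃ c' : ι → ℝ, (∀ i, 0 ≤ c' i) ∧ ∑ i, c' i • v i = ∑ i, c i • v i ∧
      LinearIndependent ℝ (fun i : {i // c' i ≠ 0} => v i) := by
  classical
  suffices Hind : ∀ N (c : ι → ℝ), (Finset.univ.filter (fun i => c i ≠ 0)).card ≤ N →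
      (∀ i, 0 ≤ c i) →
      ∃ c' : ι → ℝ, (∀ i, 0 ≤ c' i) ∧ ∑ i, c' i • v i = ∑ i, c i • v i ∧
        LinearIndependent ℝ (fun i : {i // c' i ≠ 0} => v i) from
    Hind _ c le_rfl hc
  intro N
  induction N with
  | zero =>
    intro c hcard hc
    have hcz : ∀ i, c i = 0 := by
      intro i
      by_contra hi
      have : i ∈ Finset.univ.filter (fun i => c i ≠ 0) := by simp [hi]
      have := Finset.card_pos.mpr ⟨i, this⟩
      omega
    refine ⟨c, hc, rfl, ?_⟩
    haveI : IsEmpty {i // c i ≠ 0} := ⟨fun ⟨i, hi⟩ => hi (hcz i)⟩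
    exact linearIndependent_empty_type
  | succ N ih =>
    intro c hcard hc
    by_cases hli : LinearIndependent ℝ (fun i : {i // c i ≠ 0} => v i)
    · exact ⟨c, hc, rfl, hli⟩
    · obtain ⟨g, hg0, j, hgj⟩ := Fintype.not_linearIndependent_iff.mp hli
      -- extend g to ι by zero
      set d₀ : ι → ℝ := fun i => if h : c i ≠ 0 then g ⟨i, h⟩ else 0 with hd₀
      have hd₀sum : ∑ i, d₀ i • v i = 0 := by
        have h1 : ∑ i, d₀ i • v i
            = ∑ i ∈ Finset.univ.filter (fun i => c i ≠ 0), d₀ i • v i := by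
          refine (Finset.sum_filter_of_ne ?_).symm
          intro i _ hne hci
          exact hne (by simp [hd₀, hci])
        have h2 : ∑ i : {i // c i ≠ 0}, g i • v i
            = ∑ i ∈ Finset.univ.filter (fun i => c i ≠ 0), d₀ i • v i := by
          rw [← Finset.sum_subtype_eq_sum_filter (fun i => d₀ i • v i) (s := Finset.univ),
            Finset.subtype_univ]
          refine Finset.sum_congr rfl fun i _ => ?_
          simp [hd₀, i.2]
        rw [h1, ← h2, hg0]
      have hd₀zero : ∀ i, c i = 0 → d₀ i = 0 := fun i hi => by simp [hd₀, hi]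
      have hd₀j : d₀ (j : ι) ≠ 0 := by simpa [hd₀, j.2] using hgj
      -- pick d with a positive entry
      obtain ⟨d, hdsum, hdzero, i₁, hdi₁⟩ :
          ∃ d : ι → ℝ, ∑ i, d i • v i = 0 ∧ (∀ i, c i = 0 → d i = 0) ∧ ∃ i, 0 < d i := by
        rcases lt_or_gt_of_ne hd₀j with hneg | hpos
        · refine ⟨-d₀, by simp [hd₀sum], fun i hi => by simp [hd₀zero i hi], ⟨j, ?_⟩⟩
          simpa using hneg
        · exact ⟨d₀, hd₀sum, hd₀zero, ⟨j, hpos⟩⟩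
      set P : Finset ι := Finset.univ.filter (fun i => 0 < d i) with hP
      have hPne : P.Nonempty := ⟨i₁, by simp [hP, hdi₁]⟩
      obtain ⟨i₀, hi₀P, hi₀⟩ := Finset.exists_mem_eq_inf' hPne (fun i => c i / d i)
      have hdi₀ : 0 < d i₀ := by simpa [hP] using hi₀P
      set t : ℝ := P.inf' hPne (fun i => c i / d i) with ht
      have htnonneg : 0 ≤ t := by
        rw [ht, Finset.le_inf'_iff]
        intro i hi
        have hd : 0 < d i := by simpa [hP] using hi
        exact div_nonneg (hc i) hd.le
      have htle : ∀ i, 0 < d i → t * d i ≤ c i := by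
        intro i hdi
        have : t ≤ c i / d i := Finset.inf'_le _ (by simp [hP, hdi])
        calc t * d i ≤ (c i / d i) * d i := by nlinarith
          _ = c i := div_mul_cancel₀ _ (ne_of_gt hdi)
      set c'' : ι → ℝ := fun i => c i - t * d i with hc''
      have hc''nonneg : ∀ i, 0 ≤ c'' i := by
        intro i
        rcases le_or_gt (d i) 0 with hd | hd
        · have : t * d i ≤ 0 := mul_nonpos_of_nonneg_of_nonpos htnonneg hd
          simp only [hc'']
          linarith [hc i]
        · simp only [hc'']
          linarith [htle i hd]
      have hc''sum : ∑ i, c'' i • v i = ∑ i, c i • v i := by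
        simp only [hc'', sub_smul, Finset.sum_sub_distrib, mul_smul]
        rw [← Finset.smul_sum, hdsum, smul_zero, sub_zero]
      have hc''i₀ : c'' i₀ = 0 := by
        simp only [hc'']
        rw [hi₀, div_mul_cancel₀ _ (ne_of_gt hdi₀), sub_self]
      have hci₀ : c i₀ ≠ 0 := by
        intro hzero
        exact absurd (hdzero i₀ hzero) (ne_of_gt hdi₀)
      have hsubset : Finset.univ.filter (fun i => c'' i ≠ 0)
          ⊆ (Finset.univ.filter (fun i => c i ≠ 0)).erase i₀ := by
        intro i hi
        simp only [Finset.mem_filter, Finset.mem_univ, true_and] at hi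
        refine Finset.mem_erase.mpr ⟨?_, ?_⟩
        · rintro rfl; exact hi hc''i₀
        · simp only [Finset.mem_filter, Finset.mem_univ, true_and]
          intro hzero
          exact hi (by simp [hc'', hzero, hdzero i hzero])
      have hcard'' : (Finset.univ.filter (fun i => c'' i ≠ 0)).card ≤ N := by
        have h1 := Finset.card_le_card hsubset
        have h2 : ((Finset.univ.filter (fun i => c i ≠ 0)).erase i₀).card
            = (Finset.univ.filter (fun i => c i ≠ 0)).card - 1 := by
          apply Finset.card_erase_of_mem
          simp [hci₀]
        have h3 : 0 < (Finset.univ.filter (fun i => c i ≠ 0)).card :=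
          Finset.card_pos.mpr ⟨i₀, by simp [hci₀]⟩
        omega
      obtain ⟨c', h1, h2, h3⟩ := ih c'' hcard'' hc''nonneg
      exact ⟨c', h1, h2.trans hc''sum, h3⟩

/-- The cone generated by a finite family of vectors. -/
def coneSet (v : ι → H) : Set H := {x | ∃ c : ι → ℝ, (∀ i, 0 ≤ c i) ∧ ∑ i, c i • v i = x}

omit [FiniteDimensional ℝ H] in
lemma sum_subtype_eq_full (v : ι → H) (w : ι → ℝ) (S : Finset ι)
    (h : ∀ i ∉ S, w i = 0) :
    ∑ i : {x // x ∈ S}, w i • v i = ∑ i, w i • v i := by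
  rw [Finset.sum_coe_sort S (fun i => w i • v i)]
  exact Finset.sum_subset (Finset.subset_univ S)
    (fun i _ hi => by rw [h i hi, zero_smul])

lemma isClosed_coneSet_s11 (v : ι → H) : IsClosed (coneSet v) := by
  classical
  have key : coneSet v = ⋃ S ∈ {S : Finset ι |
        LinearIndependent ℝ (fun i : {x // x ∈ S} => v i)},
      (fun c : {x // x ∈ S} → ℝ => ∑ i, c i • v i) '' {c | ∀ i, 0 ≤ c i} := by
    ext x
    simp only [Set.mem_iUnion, Set.mem_image, Set.mem_setOf_eq]
    constructor
    · rintro ⟨c, hc, rfl⟩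
      obtain ⟨c', hc', hsum, hli⟩ := conic_caratheodory v c hc
      set S : Finset ι := Finset.univ.filter (fun i => c' i ≠ 0) with hS
      have hmem : ∀ i : {x // x ∈ S}, c' (i : ι) ≠ 0 := fun i => by
        have h2 := i.2
        simp only [hS, Finset.mem_filter, Finset.mem_univ, true_and] at h2
        exact h2
      refine ⟨S, ?_, fun i => c' i, fun i => hc' i, ?_⟩
      · exact hli.comp (fun i : {x // x ∈ S} => (⟨i, hmem i⟩ : {i // c' i ≠ 0}))
          (fun a b hab => Subtype.ext (by simpa using congrArg Subtype.val hab))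
      · rw [← hsum]
        exact sum_subtype_eq_full v c' S (fun i hi => by
          by_contra hne
          exact hi (by simp [hS, hne]))
    · rintro ⟨S, hli, c, hc, rfl⟩
      set w : ι → ℝ := fun i => if h : i ∈ S then c ⟨i, h⟩ else 0 with hw
      refine ⟨w, fun i => ?_, ?_⟩
      · by_cases h : i ∈ S
        · simpa [hw, h] using hc ⟨i, h⟩
        · simp [hw, h]
      · rw [← sum_subtype_eq_full v w S (fun i hi => by simp [hw, hi])]
        exact Finset.sum_congr rfl (fun i _ => by simp [hw, i.2])
  rw [key]
  refine Set.Finite.isClosed_biUnion (Set.toFinite _) (fun S hS => ?_)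
  -- the linear map given by the linearly independent family is a closed embedding
  set f : ({x // x ∈ S} → ℝ) →ₗ[ℝ] H := Fintype.linearCombination ℝ (fun i : {x // x ∈ S} => v i)
    with hf
  have hker : LinearMap.ker f = ⊥ := by
    rw [LinearMap.ker_eq_bot']
    intro g hg
    have := Fintype.linearIndependent_iff.mp hS g (by
      simpa [hf, Fintype.linearCombination_apply] using hg)
    funext i
    exact this i
  have hemb : Topology.IsClosedEmbedding f := LinearMap.isClosedEmbedding_of_injective hker
  have hclosed : IsClosed {c : {x // x ∈ S} → ℝ | ∀ i, 0 ≤ c i} := by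
    have : {c : {x // x ∈ S} → ℝ | ∀ i, 0 ≤ c i} = ⋂ i, {c | 0 ≤ c i} :=
      by ext; simp
    rw [this]
    exact isClosed_iInter (fun i => isClosed_le continuous_const (continuous_apply i))
  have himg : (fun c : {x // x ∈ S} → ℝ => ∑ i, c i • v i) '' {c | ∀ i, 0 ≤ c i}
      = f '' {c | ∀ i, 0 ≤ c i} := by
    refine Set.image_congr (fun c _ => ?_)
    simp [hf, Fintype.linearCombination_apply]
  rw [himg]
  exact hemb.isClosedMap _ hclosed

open scoped RealInnerProductSpace in
theorem farkas_cone (v : ι → H) (b : H)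
    (hb : ∀ y : H, (∀ i, 0 ≤ ⟪v i, y⟫) → 0 ≤ ⟪b, y⟫) :
    ∃ c : ι → ℝ, (∀ i, 0 ≤ c i) ∧ ∑ i, c i • v i = b := by
  classical
  haveI : CompleteSpace H := FiniteDimensional.complete ℝ H
  by_contra hcon
  have hbK : b ∉ coneSet v := fun ⟨c, h1, h2⟩ => hcon ⟨c, h1, h2⟩
  set K : ConvexCone ℝ H :=
    { carrier := coneSet v
      smul_mem' := by
        rintro r hr x ⟨c, hc, rfl⟩
        refine ⟨fun i => r * c i, fun i => mul_nonneg hr.le (hc i), ?_⟩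
        simp [mul_smul, ← Finset.smul_sum]
      add_mem' := by
        rintro x ⟨c, hc, rfl⟩ x' ⟨c', hc', rfl⟩
        refine ⟨fun i => c i + c' i, fun i => add_nonneg (hc i) (hc' i), ?_⟩
        simp [add_smul, Finset.sum_add_distrib] } with hK
  have hne : (K : Set H).Nonempty := ⟨0, ⟨fun _ => 0, fun _ => le_rfl, by simp⟩⟩
  have hcl : IsClosed (K : Set H) := isClosed_coneSet_s11 v
  obtain ⟨y, hy1, hy2⟩ :
      ∃ y, (∀ x ∈ K, 0 ≤ ⟪x, y⟫) ∧ ⟪y, b⟫ < 0 := by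
    let C : ProperCone ℝ H :=
      { carrier := coneSet v
        add_mem' := fun ha hb => K.add_mem ha hb
        zero_mem' := ⟨fun _ => 0, fun _ => le_rfl, by simp⟩
        smul_mem' := by
          rintro ⟨r, hr⟩ x ⟨c, hc, rfl⟩
          refine ⟨fun i => r * c i, fun i => mul_nonneg hr (hc i), ?_⟩
          show _ = r • (∑ i, c i • v i : H)
          simp [mul_smul, ← Finset.smul_sum]
        isClosed' := hcl }
    obtain ⟨y, h1, h2⟩ := ProperCone.hyperplane_separation' C (x₀ := b) hbK
    exact ⟨y, fun x hx => h1 x hx, by rwa [real_inner_comm] at h2⟩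
  have hvK : ∀ i, v i ∈ K := by
    intro i
    refine ⟨fun j => if j = i then 1 else 0, fun j => by positivity, ?_⟩
    simp [ite_smul]
  have := hb y (fun i => hy1 (v i) (hvK i))
  rw [real_inner_comm] at hy2
  linarith

open scoped RealInnerProductSpace in
theorem gale {ρ σ : Type*} [Fintype ρ] [Fintype σ] [DecidableEq ρ]
    (M : Matrix ρ σ ℝ) (q : ρ → ℝ)
    (hM : ∀ w : ρ → ℝ, (∀ i, 0 ≤ w i) → (∀ j, ∑ i, M i j * w i = 0) →
      0 ≤ ∑ i, q i * w i) :
    ∃ z : σ → ℝ, ∀ i, ∑ j, M i j * z j ≤ q i := by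
  classical
  have hinner : ∀ x y : EuclideanSpace ℝ ρ, ⟪x, y⟫ = ∑ i, x i * y i := by
    intro x y
    simp [PiLp.inner_apply, RCLike.inner_apply, conj_trivial]
    exact Finset.sum_congr rfl fun i _ => mul_comm _ _
  set v : σ ⊕ σ ⊕ ρ → EuclideanSpace ℝ ρ :=
    Sum.elim (fun j => (WithLp.toLp 2 (fun i => M i j) : EuclideanSpace ℝ ρ))
      (Sum.elim (fun j => (WithLp.toLp 2 (fun i => -M i j) : EuclideanSpace ℝ ρ))
        (fun i₀ => (WithLp.toLp 2 (fun i => if i = i₀ then (1 : ℝ) else 0) : EuclideanSpace ℝ ρ))) with hv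
  obtain ⟨c, hc, hsum⟩ := farkas_cone v (WithLp.toLp 2 q : EuclideanSpace ℝ ρ) (by
    intro y hy
    rw [hinner]
    apply hM
    · intro i
      have := hy (Sum.inr (Sum.inr i))
      rw [hinner] at this
      simpa [hv, PiLp.toLp_apply] using this
    · intro j
      have h1 := hy (Sum.inl j)
      have h2 := hy (Sum.inr (Sum.inl j))
      rw [hinner] at h1 h2
      simp only [hv, Sum.elim_inl, Sum.elim_inr, PiLp.toLp_apply, neg_mul, Finset.sum_neg_distrib] at h1 h2
      linarith)
  refine ⟨fun j => c (Sum.inl j) - c (Sum.inr (Sum.inl j)), fun i => ?_⟩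
  have hqi := congrArg (fun x => x i) hsum
  have happ : (∑ k, c k • v k) i = ∑ k, c k * v k i := by
    rw [WithLp.ofLp_sum, Finset.sum_apply]
    exact Finset.sum_congr rfl fun k _ => rfl
  rw [happ] at hqi
  rw [Fintype.sum_sum_type, Fintype.sum_sum_type] at hqi
  simp only [hv, Sum.elim_inl, Sum.elim_inr, PiLp.toLp_apply, mul_ite, mul_one, mul_zero, mul_neg] at hqi
  rw [Finset.sum_ite_eq Finset.univ i (fun i₀ => c (Sum.inr (Sum.inr i₀)))] at hqi
  simp only [Finset.mem_univ, if_true, Finset.sum_neg_distrib] at hqi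
  have hrew : ∑ j, M i j * (c (Sum.inl j) - c (Sum.inr (Sum.inl j)))
      = ∑ j, c (Sum.inl j) * M i j - ∑ j, c (Sum.inr (Sum.inl j)) * M i j := by
    rw [← Finset.sum_sub_distrib]
    exact Finset.sum_congr rfl fun j _ => by ring
  rw [hrew]
  have := hc (Sum.inr (Sum.inr i))
  linarith

end FarkasDev

/-- The subproblem value gives a lower bound on the MILP optimum. -/
theorem subproblem_lower_bound (n p m : ℕ)
    (A : Matrix (Fin m) (Fin n) ℝ) (G : Matrix (Fin m) (Fin p) ℝ)
    (b : Fin m → ℝ) (c : Fin n → ℝ) (h : Fin p → ℝ)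
    (X : Set (Fin n → ℝ)) (hX : ∀ x ∈ X, ∀ i, x i = 0 ∨ x i = 1)
    (hQ : {u : Fin m → ℝ | 0 ≤ u ∧ h ≤ Gᵀ.mulVec u}.Nonempty)
    (xbar : Fin n → ℝ) (hxbar : xbar ∈ X)
    (hfeas : ∃ ybar : Fin p → ℝ, 0 ≤ ybar ∧ G.mulVec ybar ≤ b - A.mulVec xbar) :
    c ⬝ᵥ xbar + sInf ((fun u => (b - A.mulVec xbar) ⬝ᵥ u) ''
        {u : Fin m → ℝ | 0 ≤ u ∧ h ≤ Gᵀ.mulVec u}) ≤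
    sSup {z : ℝ | ∃ x ∈ X, ∃ y : Fin p → ℝ, 0 ≤ y ∧ A.mulVec x + G.mulVec y ≤ b ∧
        z = c ⬝ᵥ x + h ⬝ᵥ y} := by
  classical
  obtain ⟨ybar, hy0, hyfeas⟩ := hfeas
  obtain ⟨u₀, hu₀⟩ := hQ
  set d : Fin m → ℝ := b - A.mulVec xbar with hd
  set Q : Set (Fin m → ℝ) := {u | 0 ≤ u ∧ h ≤ Gᵀ.mulVec u} with hQdef
  set Dset : Set ℝ := (fun u => d ⬝ᵥ u) '' Q with hDset
  set Sset : Set ℝ := {z : ℝ | ∃ x ∈ X, ∃ y : Fin p → ℝ, 0 ≤ y ∧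
      A.mulVec x + G.mulVec y ≤ b ∧ z = c ⬝ᵥ x + h ⬝ᵥ y} with hSset
  -- weak duality lower bound for Dset
  have hlb : ∀ u ∈ Q, h ⬝ᵥ ybar ≤ d ⬝ᵥ u := by
    rintro u ⟨hu0, huh⟩
    have step1 : h ⬝ᵥ ybar ≤ (Gᵀ.mulVec u) ⬝ᵥ ybar := by
      apply Finset.sum_le_sum
      intro j _
      exact mul_le_mul_of_nonneg_right (huh j) (hy0 j)
    have step2 : (Gᵀ.mulVec u) ⬝ᵥ ybar = u ⬝ᵥ (G.mulVec ybar) := by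
      rw [Matrix.mulVec_transpose, ← Matrix.dotProduct_mulVec]
    have step3 : u ⬝ᵥ (G.mulVec ybar) ≤ u ⬝ᵥ d := by
      apply Finset.sum_le_sum
      intro i _
      exact mul_le_mul_of_nonneg_left (hyfeas i) (hu0 i)
    calc h ⬝ᵥ ybar ≤ (Gᵀ.mulVec u) ⬝ᵥ ybar := step1
      _ = u ⬝ᵥ (G.mulVec ybar) := step2
      _ ≤ u ⬝ᵥ d := step3
      _ = d ⬝ᵥ u := dotProduct_comm u d
  have hDbdd : BddBelow Dset := ⟨h ⬝ᵥ ybar, by rintro z ⟨u, hu, rfl⟩; exact hlb u hu⟩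
  have hDne : Dset.Nonempty := ⟨d ⬝ᵥ u₀, u₀, hu₀, rfl⟩
  -- a generic bound for dot products with binary vectors
  have hbin : ∀ (w : Fin n → ℝ) (x : Fin n → ℝ), (∀ i, x i = 0 ∨ x i = 1) →
      w ⬝ᵥ x ≤ ∑ i, |w i| := by
    intro w x hx
    apply Finset.sum_le_sum
    intro i _
    rcases hx i with hxi | hxi
    · rw [hxi, mul_zero]; exact abs_nonneg _
    · rw [hxi, mul_one]; exact le_abs_self _
  -- Sset is nonempty and bounded above
  have hz₀ : c ⬝ᵥ xbar + h ⬝ᵥ ybar ∈ Sset := by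
    refine ⟨xbar, hxbar, ybar, hy0, ?_, rfl⟩
    intro i
    have := hyfeas i
    simp only [hd, Pi.sub_apply] at this
    simpa [Pi.add_apply] using by linarith
  have hSbdd : BddAbove Sset := by
    refine ⟨(∑ i, |c i|) + ((∑ i, |(u₀ ᵥ* A) i|) + u₀ ⬝ᵥ b), ?_⟩
    rintro z ⟨x, hxX, y, hy0', hfeas', rfl⟩
    have hb1 : c ⬝ᵥ x ≤ ∑ i, |c i| := hbin c x (hX x hxX)
    have hstep1 : h ⬝ᵥ y ≤ (Gᵀ.mulVec u₀) ⬝ᵥ y := by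
      apply Finset.sum_le_sum
      intro j _
      exact mul_le_mul_of_nonneg_right (hu₀.2 j) (hy0' j)
    have hstep2 : (Gᵀ.mulVec u₀) ⬝ᵥ y = u₀ ⬝ᵥ (G.mulVec y) := by
      rw [Matrix.mulVec_transpose, ← Matrix.dotProduct_mulVec]
    have hstep3 : u₀ ⬝ᵥ (G.mulVec y) ≤ u₀ ⬝ᵥ (b - A.mulVec x) := by
      apply Finset.sum_le_sum
      intro i _
      have := hfeas' i
      simp only [Pi.add_apply] at this
      have h2 : G.mulVec y i ≤ (b - A.mulVec x) i := by
        simp only [Pi.sub_apply]; linarith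
      exact mul_le_mul_of_nonneg_left h2 (hu₀.1 i)
    have hstep4 : u₀ ⬝ᵥ (b - A.mulVec x) = u₀ ⬝ᵥ b - (u₀ ᵥ* A) ⬝ᵥ x := by
      rw [dotProduct_sub, Matrix.dotProduct_mulVec]
    have hb2 : -((u₀ ᵥ* A) ⬝ᵥ x) ≤ ∑ i, |(u₀ ᵥ* A) i| := by
      have := hbin (-(u₀ ᵥ* A)) x (hX x hxX)
      simpa [neg_dotProduct] using this
    have : h ⬝ᵥ y ≤ (∑ i, |(u₀ ᵥ* A) i|) + u₀ ⬝ᵥ b := by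
      calc h ⬝ᵥ y ≤ u₀ ⬝ᵥ (b - A.mulVec x) := by
            rw [hstep2] at hstep1; exact hstep1.trans hstep3
        _ = u₀ ⬝ᵥ b - (u₀ ᵥ* A) ⬝ᵥ x := hstep4
        _ ≤ (∑ i, |(u₀ ᵥ* A) i|) + u₀ ⬝ᵥ b := by linarith
    linarith
  -- main step: for every ε > 0 there is a good feasible y
  have main : ∀ ε : ℝ, 0 < ε → c ⬝ᵥ xbar + sInf Dset ≤ sSup Sset + ε := by
    intro ε hε
    set α : ℝ := sInf Dset with hα
    have key : ∃ y : Fin p → ℝ, 0 ≤ y ∧ G.mulVec y ≤ d ∧ α - ε ≤ h ⬝ᵥ y := by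
      by_contra hcon
      push_neg at hcon
      -- set up the Gale system
      set M : Matrix (Fin m ⊕ Fin p ⊕ Unit) (Fin p) ℝ :=
        fun r j => Sum.elim (fun i => G i j)
          (Sum.elim (fun j' => if j' = j then -1 else 0) (fun _ => -h j)) r with hM
      set q : Fin m ⊕ Fin p ⊕ Unit → ℝ :=
        Sum.elim d (Sum.elim 0 (fun _ => -(α - ε))) with hq
      have hgale : ∀ w : Fin m ⊕ Fin p ⊕ Unit → ℝ, (∀ r, 0 ≤ w r) →
          (∀ j, ∑ r, M r j * w r = 0) → 0 ≤ ∑ r, q r * w r := by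
        intro w hw0 hwcol
        set u : Fin m → ℝ := fun i => w (Sum.inl i) with hu
        set t : ℝ := w (Sum.inr (Sum.inr ())) with htdef
        have ht0 : 0 ≤ t := hw0 _
        have hcol : ∀ j, ∑ i, G i j * u i = w (Sum.inr (Sum.inl j)) + h j * t := by
          intro j
          have := hwcol j
          rw [Fintype.sum_sum_type, Fintype.sum_sum_type] at this
          simp only [hM, Sum.elim_inl, Sum.elim_inr, ite_mul, neg_one_mul, zero_mul,
            neg_mul, one_mul] at this
          rw [Finset.sum_ite_eq' Finset.univ j (fun j' => -w (Sum.inr (Sum.inl j')))] at this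
          simp only [Finset.mem_univ, if_true, Finset.univ_unique, Finset.sum_singleton] at this
          linarith [this]
        have hqsum : ∑ r, q r * w r = d ⬝ᵥ u - (α - ε) * t := by
          rw [Fintype.sum_sum_type, Fintype.sum_sum_type]
          simp only [hq, Sum.elim_inl, Sum.elim_inr, Pi.zero_apply, zero_mul,
            Finset.sum_const_zero, Finset.univ_unique, Finset.sum_singleton]
          simp [dotProduct, neg_mul]
          ring
        rw [hqsum]
        rcases eq_or_lt_of_le ht0 with ht | ht
        · -- t = 0 : recession direction
          have hGu : ∀ j, 0 ≤ ∑ i, G i j * u i := by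
            intro j
            rw [hcol j, ← ht]
            simpa using hw0 (Sum.inr (Sum.inl j))
          have hdu : 0 ≤ d ⬝ᵥ u := by
            by_contra hneg
            push_neg at hneg
            set s : ℝ := (d ⬝ᵥ u₀ - h ⬝ᵥ ybar + 1) / (-(d ⬝ᵥ u)) with hs
            have hspos : 0 < s := by
              apply div_pos
              · linarith [hlb u₀ hu₀]
              · linarith
            have hT : ∀ (uu : Fin m → ℝ) (j : Fin p),
                (Gᵀ.mulVec uu) j = ∑ i, G i j * uu i := by
              intro uu j
              simp [Matrix.mulVec, dotProduct, Matrix.transpose_apply]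
            have hmem : u₀ + s • u ∈ Q := by
              constructor
              · intro i
                have hA : (0 : Fin m → ℝ) i ≤ u₀ i := hu₀.1 i
                simp only [Pi.zero_apply] at hA
                have hB : 0 ≤ u i := hw0 (Sum.inl i)
                simp only [Pi.add_apply, Pi.smul_apply, smul_eq_mul, Pi.zero_apply]
                nlinarith
              · intro j
                have h1 := hu₀.2 j
                have h2 : (Gᵀ.mulVec (u₀ + s • u)) j
                    = (Gᵀ.mulVec u₀) j + s * ∑ i, G i j * u i := by
                  rw [Matrix.mulVec_add, Matrix.mulVec_smul]
                  simp only [Pi.add_apply, Pi.smul_apply, smul_eq_mul, hT]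
                rw [h2]
                have := hGu j
                nlinarith
            have hlb2 := hlb _ hmem
            have hcomp : d ⬝ᵥ (u₀ + s • u) = d ⬝ᵥ u₀ + s * (d ⬝ᵥ u) := by
              rw [dotProduct_add, dotProduct_smul]
              simp [smul_eq_mul]
            rw [hcomp] at hlb2
            have hval : s * (d ⬝ᵥ u) = -(d ⬝ᵥ u₀ - h ⬝ᵥ ybar + 1) := by
              rw [hs, div_neg, neg_mul, div_mul_cancel₀ _ hneg.ne]
            rw [hval] at hlb2
            linarith
          rw [← ht]
          linarith
        · -- t > 0 : rescale to get a dual feasible point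
          have hmem : t⁻¹ • u ∈ Q := by
            constructor
            · intro i
              simp only [Pi.smul_apply, smul_eq_mul, Pi.zero_apply]
              exact mul_nonneg (inv_nonneg.mpr ht.le) (hw0 (Sum.inl i))
            · intro j
              have hT : ∀ (uu : Fin m → ℝ), (Gᵀ.mulVec uu) j = ∑ i, G i j * uu i := by
                intro uu
                simp [Matrix.mulVec, dotProduct, Matrix.transpose_apply]
              have h2 : (Gᵀ.mulVec (t⁻¹ • u)) j = t⁻¹ * ∑ i, G i j * u i := by
                rw [Matrix.mulVec_smul]
                simp only [Pi.smul_apply, smul_eq_mul, hT]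
              rw [h2, hcol j]
              have hwj : 0 ≤ w (Sum.inr (Sum.inl j)) := hw0 _
              rw [mul_add]
              have : t⁻¹ * (h j * t) = h j := by field_simp
              rw [this]
              have : 0 ≤ t⁻¹ * w (Sum.inr (Sum.inl j)) :=
                mul_nonneg (inv_nonneg.mpr ht.le) hwj
              linarith
          have hαle : α ≤ d ⬝ᵥ (t⁻¹ • u) := csInf_le hDbdd ⟨_, hmem, rfl⟩
          have hcomp : d ⬝ᵥ (t⁻¹ • u) = t⁻¹ * (d ⬝ᵥ u) := by
            rw [dotProduct_smul]; simp [smul_eq_mul]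
          rw [hcomp] at hαle
          have : t * α ≤ d ⬝ᵥ u := by
            rw [← mul_le_mul_iff_right₀ ht] at hαle
            calc t * α ≤ t * (t⁻¹ * (d ⬝ᵥ u)) := by nlinarith
              _ = d ⬝ᵥ u := by field_simp
          nlinarith
      obtain ⟨z, hz⟩ := gale M q hgale
      -- z is a feasible point contradicting hcon
      have hz0 : 0 ≤ z := by
        intro j
        have := hz (Sum.inr (Sum.inl j))
        simp only [hM, hq, Sum.elim_inr, Sum.elim_inl, ite_mul, neg_one_mul, zero_mul] at this
        rw [Finset.sum_ite_eq Finset.univ j (fun j' => -z j')] at this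
        simp only [Finset.mem_univ, if_true, Pi.zero_apply] at this
        simpa using by linarith [this]
      have hzfeas : G.mulVec z ≤ d := by
        intro i
        have := hz (Sum.inl i)
        simp only [hM, hq, Sum.elim_inl] at this
        simpa [Matrix.mulVec, dotProduct] using this
      have hzval : α - ε ≤ h ⬝ᵥ z := by
        have := hz (Sum.inr (Sum.inr ()))
        simp only [hM, hq, Sum.elim_inr, neg_mul] at this
        have h2 : -(h ⬝ᵥ z) ≤ -(α - ε) := by
          simpa [dotProduct, Finset.sum_neg_distrib] using this
        linarith
      exact absurd hzval (not_le.mpr (hcon z hz0 hzfeas))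
    obtain ⟨y, hy0', hyfeas', hyval⟩ := key
    have hzS : c ⬝ᵥ xbar + h ⬝ᵥ y ∈ Sset := by
      refine ⟨xbar, hxbar, y, hy0', ?_, rfl⟩
      intro i
      have := hyfeas' i
      simp only [hd, Pi.sub_apply] at this
      simpa [Pi.add_apply] using by linarith
    have := le_csSup hSbdd hzS
    linarith
  exact le_of_forall_pos_le_add main
end

section
/- Exactness of the binary slack-variable reformulation of an inequality: Let a : Fin n → ℤ, β ∈ ℤ, and L ∈ ℕ satisfy 2^(L+1) - 1 ≥ β - Σ_{i : a i < 0} a i (so the slack range covers the maximal possible gap β - min_{x ∈ {0,1}^n} aᵀ x). Then for every x ∈ {0,1}^n, one has Σ_i a i * x i ≤ β if and only if there exist s_0, …, s_L ∈ {0,1} with Σ_i a i * x i + Σ_{l=0}^{L} 2^l * s_l = β. -/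
lemma binary_rep (L : ℕ) : ∀ m : ℕ, m < 2 ^ (L + 1) →
    ∃ s : Fin (L + 1) → ℤ, (∀ l, s l = 0 ∨ s l = 1) ∧
      ∑ l : Fin (L + 1), 2 ^ (l : ℕ) * s l = (m : ℤ) := by
  induction L with
  | zero =>
    intro m hm
    interval_cases m
    · exact ⟨fun _ => 0, fun l => Or.inl rfl, by simp⟩
    · exact ⟨fun _ => 1, fun l => Or.inr rfl, by simp⟩
  | succ L ih =>
    intro m hm
    by_cases h : m < 2 ^ (L + 1)
    · obtain ⟨s, hs, hsum⟩ := ih m h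
      refine ⟨Fin.snoc s 0, ?_, ?_⟩
      · intro l
        refine Fin.lastCases ?_ ?_ l
        · simp
        · intro i; simpa using hs i
      · rw [Fin.sum_univ_castSucc]
        simpa using hsum
    · push_neg at h
      obtain ⟨s, hs, hsum⟩ := ih (m - 2 ^ (L + 1)) (by omega)
      refine ⟨Fin.snoc s 1, ?_, ?_⟩
      · intro l
        refine Fin.lastCases ?_ ?_ l
        · simp
        · intro i; simpa using hs i
      · rw [Fin.sum_univ_castSucc]
        simp only [Fin.snoc_castSucc, Fin.snoc_last, Fin.val_last, Fin.coe_castSucc]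
        rw [hsum]
        push_cast [Nat.cast_sub h]
        ring

/-- Exactness of the binary slack-variable reformulation of an inequality. -/
theorem slack_variable_reformulation (n : ℕ) (a : Fin n → ℤ) (β : ℤ) (L : ℕ)
    (hL : β - ∑ i ∈ Finset.univ.filter (fun i => a i < 0), a i ≤ 2 ^ (L + 1) - 1) :
    ∀ x : Fin n → ℤ, (∀ i, x i = 0 ∨ x i = 1) →
      ((∑ i, a i * x i ≤ β) ↔
        ∃ s : Fin (L + 1) → ℤ, (∀ l, s l = 0 ∨ s l = 1) ∧
          ∑ i, a i * x i + ∑ l : Fin (L + 1), 2 ^ (l : ℕ) * s l = β) := by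
  intro x hx
  constructor
  · intro hle
    -- lower bound: ∑ a x ≥ ∑ neg a
    have hlow : ∑ i ∈ Finset.univ.filter (fun i => a i < 0), a i ≤ ∑ i, a i * x i := by
      rw [Finset.sum_filter]
      apply Finset.sum_le_sum
      intro i _
      rcases hx i with h | h <;> split_ifs with h2 <;> simp [h] <;> nlinarith
    set g := β - ∑ i, a i * x i with hg
    have hg0 : 0 ≤ g := by omega
    have hgbound : g < 2 ^ (L + 1) := by omega
    obtain ⟨m, hm⟩ := Int.eq_ofNat_of_zero_le hg0
    have hmlt : m < 2 ^ (L + 1) := by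
      have := hgbound; rw [hm] at this; exact_mod_cast this
    obtain ⟨s, hs, hsum⟩ := binary_rep L m hmlt
    exact ⟨s, hs, by rw [hsum, ← hm]; omega⟩
  · rintro ⟨s, hs, hsum⟩
    have : 0 ≤ ∑ l : Fin (L + 1), (2:ℤ) ^ (l : ℕ) * s l := by
      apply Finset.sum_nonneg
      intro l _
      rcases hs l with h | h <;> simp [h]
    omega
end

section
/- Finite generation of the dual recession cone (Weyl/Minkowski for polyhedral cones): There exists a finite set S ⊆ ℝ^m such that C := {r ∈ ℝ^m : r ≥ 0 and Gᵀ r ≥ 0} equals the set of all nonnegative linear combinations of elements of S, i.e., C = {Σ_{s ∈ S} λ_s • s : λ : S → ℝ, λ_s ≥ 0 for all s}. -/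
open Matrix Finset NNReal

namespace RecessionConeAux

noncomputable section

variable {m : ℕ}

/-- The halfspace `{x | 0 ≤ a ⬝ᵥ x}` as an `ℝ≥0`-submodule. -/
def halfspace (a : Fin m → ℝ) : Submodule ℝ≥0 (Fin m → ℝ) where
  carrier := {x | 0 ≤ a ⬝ᵥ x}
  add_mem' := by
    intro x y hx hy
    simp only [Set.mem_setOf_eq, dotProduct_add] at *
    exact add_nonneg hx hy
  zero_mem' := by simp [dotProduct]
  smul_mem' := by
    intro c x hx
    simp only [Set.mem_setOf_eq, NNReal.smul_def, dotProduct_smul, smul_eq_mul] at *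
    exact mul_nonneg c.2 hx

lemma mem_span_finset {s : Finset (Fin m → ℝ)} {x : Fin m → ℝ} :
    x ∈ Submodule.span ℝ≥0 (↑s : Set (Fin m → ℝ)) ↔
      ∃ f : (Fin m → ℝ) → ℝ≥0, ∑ i ∈ s, f i • i = x := by
  constructor
  · intro h
    obtain ⟨f, -, hf⟩ := Submodule.mem_span_finset.mp h
    exact ⟨f, hf⟩
  · rintro ⟨f, rfl⟩
    exact Submodule.sum_mem _ fun i hi => Submodule.smul_mem _ _ (Submodule.subset_span hi)

lemma dot_sum {ι : Type*} (a : Fin m → ℝ) (t : Finset ι) (g : ι → Fin m → ℝ) :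
    a ⬝ᵥ (∑ s ∈ t, g s) = ∑ s ∈ t, a ⬝ᵥ g s := by
  simp only [dotProduct, Finset.sum_apply, Finset.mul_sum]
  exact Finset.sum_comm

/-- Double description step: intersecting a finitely generated cone with a halfspace. -/
lemma span_inter_halfspace (S : Finset (Fin m → ℝ)) (a : Fin m → ℝ) :
    ∃ T : Finset (Fin m → ℝ),
      ((Submodule.span ℝ≥0 (↑S : Set (Fin m → ℝ)) : Set (Fin m → ℝ)) ∩ {x | 0 ≤ a ⬝ᵥ x})
        = (Submodule.span ℝ≥0 (↑T : Set (Fin m → ℝ)) : Set (Fin m → ℝ)) := by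
  classical
  set Sp : Finset (Fin m → ℝ) := S.filter (fun s => 0 ≤ a ⬝ᵥ s) with hSp
  set Sn : Finset (Fin m → ℝ) := S.filter (fun s => ¬ 0 ≤ a ⬝ᵥ s) with hSn
  set w : (Fin m → ℝ) × (Fin m → ℝ) → (Fin m → ℝ) :=
    fun q => (a ⬝ᵥ q.1) • q.2 + (-(a ⬝ᵥ q.2)) • q.1 with hw
  set W : Finset (Fin m → ℝ) := (Sp ×ˢ Sn).image w with hW
  refine ⟨Sp ∪ W, ?_⟩
  apply Set.Subset.antisymm
  · -- hard direction
    rintro x ⟨hx, hxa⟩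
    rw [SetLike.mem_coe, mem_span_finset] at hx
    obtain ⟨f, hf⟩ := hx
    set F : (Fin m → ℝ) → ℝ := fun s => (f s : ℝ) with hF
    have hFnn : ∀ s, 0 ≤ F s := fun s => (f s).2
    have hx' : x = ∑ s ∈ S, F s • s := by
      rw [← hf]; exact (Finset.sum_congr rfl (fun s _ => by rw [NNReal.smul_def])).symm
    set A : ℝ := ∑ s ∈ Sp, F s * (a ⬝ᵥ s) with hA
    set B : ℝ := ∑ t ∈ Sn, F t * (-(a ⬝ᵥ t)) with hB
    have hAnn : 0 ≤ A := Finset.sum_nonneg fun s hs => by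
      exact mul_nonneg (hFnn s) (Finset.mem_filter.mp hs).2
    have hBnn : 0 ≤ B := Finset.sum_nonneg fun t ht => by
      have := (Finset.mem_filter.mp ht).2
      exact mul_nonneg (hFnn t) (by linarith [lt_of_not_ge this])
    have hsplit : (∑ s ∈ Sp, F s • s) + (∑ t ∈ Sn, F t • t) = x := by
      rw [hx']; exact Finset.sum_filter_add_sum_filter_not S _ _
    have hdot : a ⬝ᵥ x = A - B := by
      rw [← hsplit, dotProduct_add, dot_sum, dot_sum, hA, hB, sub_eq_add_neg,
        ← Finset.sum_neg_distrib]
      congr 1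
      · exact Finset.sum_congr rfl fun s _ => by
          rw [dotProduct_smul, smul_eq_mul]
      · exact Finset.sum_congr rfl fun t _ => by
          rw [dotProduct_smul, smul_eq_mul]; ring
    have hBA : B ≤ A := by
      have := hxa
      simp only [Set.mem_setOf_eq] at this
      linarith [hdot ▸ this]
    have memSp : ∀ s ∈ Sp, s ∈ Submodule.span ℝ≥0 ((↑(Sp ∪ W) : Set (Fin m → ℝ))) := by
      intro s hs
      exact Submodule.subset_span (by simp [Finset.mem_union, hs])
    by_cases hBz : B = 0
    · -- all negative-part coefficients vanish
      have hall : ∀ t ∈ Sn, F t * (-(a ⬝ᵥ t)) = 0 := by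
        rw [← Finset.sum_eq_zero_iff_of_nonneg]
        · exact hBz ▸ rfl
        · intro t ht
          have := (Finset.mem_filter.mp ht).2
          exact mul_nonneg (hFnn t) (by linarith [lt_of_not_ge this])
      have hFz : ∀ t ∈ Sn, F t = 0 := by
        intro t ht
        have h2 := (Finset.mem_filter.mp ht).2
        have hpos : 0 < -(a ⬝ᵥ t) := by linarith [lt_of_not_ge h2]
        have := hall t ht
        rcases mul_eq_zero.mp this with h | h
        · exact h
        · exact absurd h (ne_of_gt hpos)
      have hxSp : x = ∑ s ∈ Sp, F s • s := by
        have hz : ∑ t ∈ Sn, F t • t = 0 :=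
          Finset.sum_eq_zero (fun t ht => by rw [hFz t ht, zero_smul])
        rw [← hsplit, hz, add_zero]
      rw [SetLike.mem_coe, hxSp]
      exact Submodule.sum_mem _ fun s hs => by
        have : F s • s = (f s) • s := rfl
        rw [this]
        exact Submodule.smul_mem _ _ (memSp s hs)
    · have hBpos : 0 < B := lt_of_le_of_ne hBnn (Ne.symm hBz)
      have hApos : 0 < A := lt_of_lt_of_le hBpos hBA
      have hAne : A ≠ 0 := ne_of_gt hApos
      -- the key identity
      have key : x = (∑ s ∈ Sp, (F s * (A - B) / A) • s)
          + ∑ q ∈ Sp ×ˢ Sn, ((F q.1 * F q.2) / A) • w q := by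
        have hsum := hsplit
        funext i
        have hRHS : ((∑ s ∈ Sp, (F s * (A - B) / A) • s)
            + ∑ q ∈ Sp ×ˢ Sn, ((F q.1 * F q.2) / A) • w q) i
            = (∑ s ∈ Sp, (F s * (A - B) / A) * s i)
              + ∑ s ∈ Sp, ∑ t ∈ Sn, ((F s * F t) / A) *
                  ((a ⬝ᵥ s) * t i + (-(a ⬝ᵥ t)) * s i) := by
          simp [Finset.sum_product, hw, Finset.sum_apply, smul_eq_mul, mul_add]
        have hLHS : x i = (∑ s ∈ Sp, F s * s i) + ∑ t ∈ Sn, F t * t i := by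
          rw [← hsplit]
          simp [Finset.sum_apply, smul_eq_mul]
        rw [hRHS, hLHS]
        set T : ℝ := ∑ t ∈ Sn, F t * t i with hTt
        have inner : ∀ s ∈ Sp, ∑ t ∈ Sn, F s * F t / A *
              (a ⬝ᵥ s * t i + -(a ⬝ᵥ t) * s i)
            = (F s * (a ⬝ᵥ s) / A) * T + (F s / A * s i) * B := by
          intro s _
          rw [hTt, hB, Finset.mul_sum, Finset.mul_sum, ← Finset.sum_add_distrib]
          exact Finset.sum_congr rfl fun t _ => by ring
        rw [Finset.sum_congr rfl inner, Finset.sum_add_distrib]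
        have e1 : ∑ s ∈ Sp, (F s * (a ⬝ᵥ s) / A) * T = T := by
          rw [← Finset.sum_mul, ← Finset.sum_div, ← hA, div_self hAne, one_mul]
        have e2 : ∑ s ∈ Sp, F s * (A - B) / A * s i + ∑ s ∈ Sp, (F s / A * s i) * B
            = ∑ s ∈ Sp, F s * s i := by
          rw [← Finset.sum_add_distrib]
          refine Finset.sum_congr rfl fun s _ => ?_
          field_simp
          ring
        rw [e1]
        linarith [e2]
      rw [SetLike.mem_coe, key]
      apply Submodule.add_mem
      · apply Submodule.sum_mem
        intro s hs
        have hc : 0 ≤ F s * (A - B) / A :=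
          div_nonneg (mul_nonneg (hFnn s) (by linarith)) hAnn
        have : (F s * (A - B) / A) • s = (⟨_, hc⟩ : ℝ≥0) • s := by
          rfl
        rw [this]
        exact Submodule.smul_mem _ _ (memSp s hs)
      · apply Submodule.sum_mem
        intro q hq
        have hc : 0 ≤ (F q.1 * F q.2) / A :=
          div_nonneg (mul_nonneg (hFnn q.1) (hFnn q.2)) hAnn
        have : ((F q.1 * F q.2) / A) • w q = (⟨_, hc⟩ : ℝ≥0) • w q := by
          rfl
        rw [this]
        apply Submodule.smul_mem
        apply Submodule.subset_span
        simp only [Finset.coe_union, Set.mem_union, Finset.mem_coe]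
        right
        rw [hW]
        exact Finset.mem_image.mpr ⟨q, hq, rfl⟩
  · -- easy direction : generators lie in the intersection
    intro x hx
    rw [SetLike.mem_coe, mem_span_finset] at hx
    obtain ⟨f, hf⟩ := hx
    have hgen : ∀ v ∈ Sp ∪ W,
        v ∈ Submodule.span ℝ≥0 ((↑S : Set (Fin m → ℝ))) ∧ 0 ≤ a ⬝ᵥ v := by
      intro v hv
      rcases Finset.mem_union.mp hv with hv | hv
      · obtain ⟨hvS, hva⟩ := Finset.mem_filter.mp hv
        exact ⟨Submodule.subset_span hvS, hva⟩
      · obtain ⟨q, hq, rfl⟩ := Finset.mem_image.mp hv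
        obtain ⟨hq1, hq2⟩ := Finset.mem_product.mp hq
        obtain ⟨hq1S, hq1a⟩ := Finset.mem_filter.mp hq1
        obtain ⟨hq2S, hq2a⟩ := Finset.mem_filter.mp hq2
        have hq2a' : a ⬝ᵥ q.2 < 0 := lt_of_not_ge hq2a
        constructor
        · apply Submodule.add_mem
          · have : (a ⬝ᵥ q.1) • q.2 = (⟨_, hq1a⟩ : ℝ≥0) • q.2 := by rfl
            rw [this]
            exact Submodule.smul_mem _ _ (Submodule.subset_span hq2S)
          · have hnn : (0:ℝ) ≤ -(a ⬝ᵥ q.2) := by linarith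
            have : (-(a ⬝ᵥ q.2)) • q.1 = (⟨_, hnn⟩ : ℝ≥0) • q.1 := by rfl
            rw [this]
            exact Submodule.smul_mem _ _ (Submodule.subset_span hq1S)
        · rw [hw]
          simp only [dotProduct_add, dotProduct_smul, smul_eq_mul]
          nlinarith
    constructor
    · rw [SetLike.mem_coe, ← hf]
      exact Submodule.sum_mem _ fun v hv => Submodule.smul_mem _ _ (hgen v hv).1
    · simp only [Set.mem_setOf_eq, ← hf]
      rw [show a ⬝ᵥ (∑ v ∈ Sp ∪ W, f v • v) = ∑ v ∈ Sp ∪ W, (f v : ℝ) * (a ⬝ᵥ v) by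
        rw [dot_sum]
        exact Finset.sum_congr rfl fun v _ => by
          rw [NNReal.smul_def, dotProduct_smul, smul_eq_mul]]
      exact Finset.sum_nonneg fun v hv => mul_nonneg (f v).2 (hgen v hv).2

/-- Weyl's theorem for a finite list of homogeneous inequalities. -/
lemma weyl_list (L : List (Fin m → ℝ)) :
    ∃ T : Finset (Fin m → ℝ),
      {x : Fin m → ℝ | ∀ a ∈ L, 0 ≤ a ⬝ᵥ x}
        = (Submodule.span ℝ≥0 (↑T : Set (Fin m → ℝ)) : Set (Fin m → ℝ)) := by
  classical
  induction L with
  | nil =>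
    refine ⟨(Finset.univ.image fun i : Fin m => Pi.single i (1:ℝ))
      ∪ (Finset.univ.image fun i : Fin m => Pi.single i (-1:ℝ)), ?_⟩
    apply Set.Subset.antisymm
    · intro x _
      have hterm : ∀ j i : Fin m,
          (max (x i) 0) * ((Pi.single i (1:ℝ) : Fin m → ℝ) j)
            + (max (-(x i)) 0) * ((Pi.single i (-1:ℝ) : Fin m → ℝ) j)
            = if j = i then x i else 0 := by
        intro j i
        simp only [Pi.single_apply]
        split
        · have h := max_zero_sub_max_neg_zero_eq_self (x i)
          simp only [mul_one, mul_neg]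
          linarith
        · ring
      have hx : x = ∑ i : Fin m, ((max (x i) 0) • (Pi.single i (1:ℝ) : Fin m → ℝ)
          + (max (-(x i)) 0) • (Pi.single i (-1:ℝ) : Fin m → ℝ)) := by
        funext j
        simp only [Finset.sum_apply, Pi.add_apply, Pi.smul_apply, smul_eq_mul]
        rw [Finset.sum_congr rfl fun i _ => hterm j i]
        simp
      rw [SetLike.mem_coe, hx]
      apply Submodule.sum_mem
      intro i _
      apply Submodule.add_mem
      · have hc : (0:ℝ) ≤ max (x i) 0 := le_max_right _ _
        have heq : (max (x i) 0) • (Pi.single i (1:ℝ) : Fin m → ℝ)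
            = (⟨_, hc⟩ : ℝ≥0) • (Pi.single i (1:ℝ) : Fin m → ℝ) := by
          rfl
        rw [heq]
        exact Submodule.smul_mem _ _ (Submodule.subset_span (by
          simp only [Finset.coe_union, Set.mem_union, Finset.coe_image, Set.mem_image]
          exact Or.inl ⟨i, Finset.mem_coe.mpr (Finset.mem_univ i), rfl⟩))
      · have hc : (0:ℝ) ≤ max (-(x i)) 0 := le_max_right _ _
        have heq : (max (-(x i)) 0) • (Pi.single i (-1:ℝ) : Fin m → ℝ)
            = (⟨_, hc⟩ : ℝ≥0) • (Pi.single i (-1:ℝ) : Fin m → ℝ) := by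
          rfl
        rw [heq]
        exact Submodule.smul_mem _ _ (Submodule.subset_span (by
          simp only [Finset.coe_union, Set.mem_union, Finset.coe_image, Set.mem_image]
          exact Or.inr ⟨i, Finset.mem_coe.mpr (Finset.mem_univ i), rfl⟩))
    · intro x _ a ha
      exact absurd ha (List.not_mem_nil)
  | cons a L ih =>
    obtain ⟨T, hT⟩ := ih
    obtain ⟨T', hT'⟩ := span_inter_halfspace T a
    refine ⟨T', ?_⟩
    rw [← hT']
    ext x
    simp only [Set.mem_setOf_eq, List.mem_cons, Set.mem_inter_iff, ← hT]
    constructor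
    · intro h
      exact ⟨fun b hb => h b (Or.inr hb), h a (Or.inl rfl)⟩
    · rintro ⟨h1, h2⟩ b hb
      rcases hb with rfl | hb
      · exact h2
      · exact h1 b hb

end

end RecessionConeAux

open RecessionConeAux

/-- Finite generation of the dual recession cone (Weyl/Minkowski for polyhedral cones). -/
theorem recession_cone_finitely_generated (p m : ℕ) (G : Matrix (Fin m) (Fin p) ℝ) :
    ∃ S : Finset (Fin m → ℝ),
      {r : Fin m → ℝ | 0 ≤ r ∧ 0 ≤ Gᵀ.mulVec r} =
        {x : Fin m → ℝ | ∃ lam : (Fin m → ℝ) → ℝ,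
          (∀ s ∈ S, 0 ≤ lam s) ∧ x = ∑ s ∈ S, lam s • s} := by
  classical
  set L : List (Fin m → ℝ) :=
    (List.ofFn fun i : Fin m => Pi.single i (1:ℝ))
      ++ (List.ofFn fun j : Fin p => fun i => G i j) with hL
  obtain ⟨T, hT⟩ := weyl_list L
  refine ⟨T, ?_⟩
  have hset : {r : Fin m → ℝ | 0 ≤ r ∧ 0 ≤ Gᵀ.mulVec r}
      = {x : Fin m → ℝ | ∀ a ∈ L, 0 ≤ a ⬝ᵥ x} := by
    ext r
    simp only [Set.mem_setOf_eq, hL, List.mem_append, List.mem_ofFn]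
    constructor
    · rintro ⟨h1, h2⟩ a ha
      rcases ha with ⟨i, rfl⟩ | ⟨j, rfl⟩
      · rw [show Pi.single i (1:ℝ) ⬝ᵥ r = r i by simp [dotProduct, Pi.single_apply]]
        exact h1 i
      · have := h2 j
        rw [show (fun i => G i j) ⬝ᵥ r = Gᵀ.mulVec r j by
          simp [mulVec, dotProduct, transpose_apply]]
        exact this
    · intro h
      constructor
      · intro i
        have := h (Pi.single i (1:ℝ)) (Or.inl ⟨i, rfl⟩)
        rwa [show Pi.single i (1:ℝ) ⬝ᵥ r = r i by simp [dotProduct, Pi.single_apply]] at this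
      · intro j
        have := h (fun i => G i j) (Or.inr ⟨j, rfl⟩)
        rwa [show (fun i => G i j) ⬝ᵥ r = Gᵀ.mulVec r j by
          simp [mulVec, dotProduct, transpose_apply]] at this
  rw [hset, hT]
  ext x
  simp only [SetLike.mem_coe, Set.mem_setOf_eq]
  rw [mem_span_finset]
  constructor
  · rintro ⟨f, hf⟩
    exact ⟨fun s => (f s : ℝ), fun s _ => (f s).2, by
      rw [← hf]
      exact (Finset.sum_congr rfl fun s _ => by rw [NNReal.smul_def]).symm⟩
  · rintro ⟨lam, hlam, rfl⟩
    refine ⟨fun s => Real.toNNReal (lam s), ?_⟩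
    apply Finset.sum_congr rfl
    intro s hs
    rw [NNReal.smul_def, Real.coe_toNNReal _ (hlam s hs)]
end
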